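/- arXiv:1612.01320 — 7 statements merged into one kernel-verified Lean document; each statement's English description precedes it below -/
import Mathlib

section
/- The coefficient of q in the generalized chromatic polynomial of the complete graph K_n with multiplicities k = (k_1, ..., k_n), all k_i positive, has absolute value equal to (k_1 + ··· + k_n - 1)! / (k_1! ··· k_n!). -/
/-!
Gluing bijections `Fin (k i) ≃ τ i` along a multicoloring `τ` of the complete graph gives an
injection `Σ i, Fin (k i) ↪ Fin q`, and every injection arises from exactly `∏ i, (k i)!`
such pairs. Hence the number of multicolorings is `q (q - 1) ⋯ (q - K + 1) / ∏ i, (k i)!` with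
`K = ∑ i, k i`, so the polynomial is `descPochhammer K / ∏ i, (k i)!`, whose coefficient of `q`
is `(-1)^(K-1) (K-1)! / ∏ i, (k i)!`.
-/

open Finset Polynomial

theorem descPochhammer_eval_neg_one (R : Type*) [CommRing R] (m : ℕ) :
    (descPochhammer R m).eval (-1) = (-1) ^ m * m.factorial := by
  induction m with
  | zero => simp
  | succ m ih =>
    rw [descPochhammer_succ_right, eval_mul, eval_sub, eval_X, eval_natCast, ih,
      Nat.factorial_succ]
    push_cast
    ring

theorem descPochhammer_coeff_one (R : Type*) [CommRing R] (m : ℕ) :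
    (descPochhammer R (m + 1)).coeff 1 = (-1) ^ m * m.factorial := by
  rw [descPochhammer_succ_left, show 1 = 0 + 1 from rfl, coeff_X_mul, coeff_zero_eq_eval_zero,
    eval_comp, eval_sub, eval_X, eval_one, zero_sub, descPochhammer_eval_neg_one]

theorem Nat.card_eq_card_mul_of_card_fiber {α β : Type*} [Finite α] [Finite β] (f : α → β)
    {m : ℕ} (h : ∀ b, Nat.card {a // f a = b} = m) : Nat.card α = Nat.card β * m := by
  have := Fintype.ofFinite β
  rw [← Nat.card_congr (Equiv.sigmaFiberEquiv f), Nat.card_sigma,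
    Finset.sum_congr rfl fun b _ => h b, sum_const, Finset.card_univ, smul_eq_mul,
    Nat.card_eq_fintype_card]

/-- Proper multicolorings of the complete graph on `ι` with colors in `α`. -/
def Multicoloring (ι α : Type*) (k : ι → ℕ) : Type _ :=
  {τ : ι → Finset α // (∀ i, #(τ i) = k i) ∧ ∀ i j, i ≠ j → Disjoint (τ i) (τ j)}

namespace Multicoloring

variable {ι α : Type*} {k : ι → ℕ}

instance [Finite ι] [Finite α] : Finite (Multicoloring ι α k) := by
  unfold Multicoloring; infer_instance

def ofEmbedding (f : (Σ i, Fin (k i)) ↪ α) : Multicoloring ι α k :=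
  ⟨fun i => univ.map ((Function.Embedding.sigmaMk i).trans f), fun i => by simp,
    fun i j hij => disjoint_left.2 fun x hi hj => by
      obtain ⟨a, -, rfl⟩ := mem_map.1 hi
      obtain ⟨b, -, hb⟩ := mem_map.1 hj
      exact hij (congrArg Sigma.fst (f.injective hb)).symm⟩

theorem mem_ofEmbedding (f : (Σ i, Fin (k i)) ↪ α) (i : ι) (a : Fin (k i)) :
    f ⟨i, a⟩ ∈ (ofEmbedding f).1 i :=
  mem_map_of_mem _ (mem_univ a)

def glue (τ : Multicoloring ι α k) (e : ∀ i, Fin (k i) ≃ τ.1 i) : (Σ i, Fin (k i)) ↪ α where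
  toFun p := e p.1 p.2
  inj' := by
    rintro ⟨i, a⟩ ⟨j, b⟩ (h : (e i a : α) = e j b)
    obtain rfl : i = j := by
      by_contra hij
      exact disjoint_left.1 (τ.2.2 i j hij) (e i a).2 (h ▸ (e j b).2)
    rw [(e i).injective (Subtype.ext h)]

theorem ofEmbedding_glue (τ : Multicoloring ι α k) (e : ∀ i, Fin (k i) ≃ τ.1 i) :
    ofEmbedding (glue τ e) = τ := by
  refine Subtype.ext (funext fun i => ext fun x => ?_)
  simp only [ofEmbedding, mem_map, mem_univ, true_and]
  exact ⟨fun ⟨a, ha⟩ => ha ▸ (e i a).2, fun hx =>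
    ⟨(e i).symm ⟨x, hx⟩, congrArg Subtype.val ((e i).apply_symm_apply ⟨x, hx⟩)⟩⟩

noncomputable def fiberEquiv (τ : Multicoloring ι α k) :
    {f : (Σ i, Fin (k i)) ↪ α // ofEmbedding f = τ} ≃ ∀ i, Fin (k i) ≃ τ.1 i where
  toFun f i := Equiv.ofBijective
      (fun a => ⟨f.1 ⟨i, a⟩, congrFun (congrArg Subtype.val f.2) i ▸ mem_ofEmbedding f.1 i a⟩) <| by
    refine (Fintype.bijective_iff_injective_and_card _).2 ⟨fun a b h => ?_, by simp [τ.2.1 i]⟩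
    exact eq_of_heq (Sigma.mk.inj_iff.1 (f.1.injective (congrArg Subtype.val h))).2
  invFun e := ⟨glue τ e, ofEmbedding_glue τ e⟩
  left_inv f := rfl
  right_inv e := funext fun i => Equiv.ext fun a => rfl

theorem card_fiber [Fintype ι] (τ : Multicoloring ι α k) :
    Nat.card {f : (Σ i, Fin (k i)) ↪ α // ofEmbedding f = τ} = ∏ i, (k i).factorial := by
  classical
  rw [Nat.card_congr (fiberEquiv τ), Nat.card_pi]
  refine prod_congr rfl fun i _ => ?_
  rw [Nat.card_eq_fintype_card, Fintype.card_equiv ((τ.1 i).equivFinOfCardEq (τ.2.1 i)).symm,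
    Fintype.card_fin]

theorem card_mul_prod_factorial [Fintype ι] [Fintype α] :
    Nat.card (Multicoloring ι α k) * ∏ i, (k i).factorial =
      (Fintype.card α).descFactorial (∑ i, k i) := by
  rw [← Nat.card_eq_card_mul_of_card_fiber ofEmbedding card_fiber, Nat.card_eq_fintype_card,
    Fintype.card_embedding_eq, Fintype.card_sigma]
  simp

theorem eq_C_mul_descPochhammer {K : Type*} [Fintype ι] [Field K] [CharZero K] (P : K[X])
    (hP : ∀ q : ℕ, P.eval (q : K) = Nat.card (Multicoloring ι (Fin q) k)) :
    P = C (∏ i, ((k i).factorial : K))⁻¹ * descPochhammer K (∑ i, k i) := by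
  refine eq_of_infinite_eval_eq _ _ <|
    Set.infinite_of_injective_forall_mem Nat.cast_injective fun q => ?_
  have hprod : (∏ i, ((k i).factorial : K)) ≠ 0 :=
    prod_ne_zero_iff.2 fun i _ => Nat.cast_ne_zero.2 (Nat.factorial_ne_zero _)
  have hcount := card_mul_prod_factorial (ι := ι) (α := Fin q) (k := k)
  rw [Fintype.card_fin] at hcount
  rw [Set.mem_ofPred_eq, hP, eval_mul, eval_C, descPochhammer_eval_eq_descFactorial, ← hcount]
  push_cast
  field_simp

end Multicoloring

/-- The coefficient of `q` in the generalized chromatic polynomial of the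
complete graph `K_n` with positive multiplicities `k` has absolute value
`(k₁+⋯+k_n-1)! / (k₁!⋯k_n!)`.  The polynomial `P` is characterized by its values at
natural numbers: `P(q)` counts proper multicolorings of `K_n` with `q` colors. -/
theorem stmt1 (n : ℕ) (hn : 0 < n) (k : Fin n → ℕ) (hk : ∀ i, 0 < k i)
    (P : Polynomial ℚ)
    (hP : ∀ q : ℕ, P.eval (q : ℚ) =
      Nat.card {τ : Fin n → Finset (Fin q) //
        (∀ i, (τ i).card = k i) ∧ ∀ i j : Fin n, i ≠ j → Disjoint (τ i) (τ j)}) :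
    |P.coeff 1| = ((Nat.factorial ((∑ i, k i) - 1) : ℕ) : ℚ) / ∏ i, ((Nat.factorial (k i) : ℕ) : ℚ) := by
  obtain ⟨m, hm⟩ : ∃ m, ∑ i, k i = m + 1 :=
    Nat.exists_eq_add_one.2 (sum_pos (fun i _ => hk i) ⟨⟨0, hn⟩, mem_univ _⟩)
  rw [Multicoloring.eq_C_mul_descPochhammer P hP, hm, coeff_C_mul, descPochhammer_coeff_one,
    Nat.add_sub_cancel, abs_mul, abs_mul, abs_pow, abs_neg, abs_one, one_pow, one_mul, abs_inv,
    Nat.abs_cast, abs_of_pos (prod_pos fun i _ => by positivity), inv_mul_eq_div]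
end

section
/- Let T be a tree on vertices {1,...,n} ordered so that for each i < n, vertex i is a leaf of the subgraph spanned by {i, i+1, ..., n}, and let i' denote the unique vertex adjacent to i in that subgraph. Then for any tuple of positive integers k = (k_1,...,k_n), the generalized chromatic polynomial satisfies π^T_k(q) = C(q - k_{1'}, k_1) · C(q - k_{2'}, k_2) ··· C(q - k_{(n-1)'}, k_{n-1}) · C(q, k_n). -/
open Finset

lemma aux_card (q m : ℕ) (t : Finset (Fin q)) :
    Nat.card {s : Finset (Fin q) // s.card = m ∧ Disjoint s t} = (q - t.card).choose m := by
  have he : ∀ s : Finset (Fin q), (s.card = m ∧ Disjoint s t) ↔ s ∈ (tᶜ).powersetCard m := by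
    intro s
    rw [Finset.mem_powersetCard, and_comm, ← Finset.le_iff_subset, le_compl_iff_disjoint_right]
  rw [Nat.card_congr (Equiv.subtypeEquivRight he), Nat.card_eq_fintype_card,
    Fintype.card_coe, Finset.card_powersetCard, Finset.card_compl, Fintype.card_fin]



/-- For a tree on vertices `{0,…,n}` in which each vertex `i < n` is a leaf of the
subgraph spanned by `{i,…,n}` with unique neighbour `parent i > i`, the generalized chromatic
polynomial with positive multiplicities `k` is
`∏_{i<n} C(q - k (parent i), k i) · C(q, k n)`.  A proper multicoloring assigns `k i` colors
from `q` colors to vertex `i` with adjacent vertices (the pairs `(i, parent i)`) receiving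
disjoint color sets. -/
theorem stmt2 (n q : ℕ) (k : Fin (n + 1) → ℕ) (hk : ∀ i, 0 < k i)
    (parent : Fin n → Fin (n + 1)) (hpar : ∀ i : Fin n, (i : ℕ) < (parent i : ℕ)) :
    Nat.card {τ : Fin (n + 1) → Finset (Fin q) //
        (∀ i, (τ i).card = k i) ∧
        ∀ i : Fin n, Disjoint (τ i.castSucc) (τ (parent i))} =
      (∏ i : Fin n, Nat.choose (q - k (parent i)) (k i.castSucc)) *
        Nat.choose q (k (Fin.last n)) := by
  classical
  induction n with
  | zero =>
      simp only [Finset.univ_eq_empty, Finset.prod_empty, one_mul]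
      have E : {τ : Fin 1 → Finset (Fin q) //
          (∀ i, (τ i).card = k i) ∧
          ∀ i : Fin 0, Disjoint (τ i.castSucc) (τ (parent i))} ≃
          {s : Finset (Fin q) // s.card = k 0 ∧ Disjoint s (∅ : Finset (Fin q))} :=
        { toFun := fun τ => ⟨τ.1 0, τ.2.1 0, disjoint_bot_right⟩
          invFun := fun s => ⟨fun _ => s.1, fun i => by
              have : i = 0 := Subsingleton.elim _ _
              rw [this]; exact s.2.1, fun i => i.elim0⟩
          left_inv := fun τ => Subtype.ext (funext fun i => by
            have : i = 0 := Subsingleton.elim _ _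
            rw [this])
          right_inv := fun s => rfl }
      rw [Nat.card_congr E, aux_card, Finset.card_empty, Nat.sub_zero]
      rfl
  | succ n ih =>
      -- shifted data
      set k' : Fin (n + 1) → ℕ := fun i => k i.succ with hk'
      have hp0 : ∀ i : Fin (n + 1), parent i ≠ 0 := by
        intro i h
        have := hpar i
        rw [h] at this
        simp at this
      set parent' : Fin n → Fin (n + 1) := fun i => (parent i.succ).pred (hp0 i.succ)
        with hparent'
      have hsp : ∀ i : Fin n, (parent' i).succ = parent i.succ := fun i =>
        Fin.succ_pred _ _
      have hpar' : ∀ i : Fin n, (i : ℕ) < (parent' i : ℕ) := by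
        intro i
        have h := hpar i.succ
        have h2 : ((parent' i : ℕ) + 1) = (parent i.succ : ℕ) := by
          have := congrArg (Fin.val) (hsp i)
          simpa [Fin.val_succ] using this
        have h3 : ((i.succ : Fin (n+1)) : ℕ) = (i : ℕ) + 1 := Fin.val_succ i
        omega
      set S := {σ : Fin (n + 1) → Finset (Fin q) //
          (∀ i, (σ i).card = k' i) ∧
          ∀ i : Fin n, Disjoint (σ i.castSucc) (σ (parent' i))} with hS
      set p0 : Fin (n + 1) := (parent 0).pred (hp0 0) with hp0d
      have hsp0 : p0.succ = parent 0 := Fin.succ_pred _ _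
      have E : {τ : Fin (n + 2) → Finset (Fin q) //
          (∀ i, (τ i).card = k i) ∧
          ∀ i : Fin (n + 1), Disjoint (τ i.castSucc) (τ (parent i))} ≃
          (Σ σ : S, {s : Finset (Fin q) // s.card = k 0 ∧ Disjoint s (σ.1 p0)}) :=
        { toFun := fun τ =>
            ⟨⟨fun i => τ.1 i.succ, fun i => τ.2.1 i.succ, fun i => by
                have h := τ.2.2 i.succ
                rwa [← Fin.succ_castSucc, ← hsp i] at h⟩,
              ⟨τ.1 0, τ.2.1 0, by
                have h := τ.2.2 0
                rwa [← hsp0] at h⟩⟩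
          invFun := fun ⟨σ, s⟩ =>
            ⟨Fin.cases s.1 σ.1, by
              constructor
              · intro i
                induction i using Fin.cases with
                | zero => exact s.2.1
                | succ j => exact σ.2.1 j
              · intro i
                induction i using Fin.cases with
                | zero =>
                    show Disjoint ((Fin.cases s.1 σ.1 : Fin (n+2) → Finset (Fin q))
                        ((0 : Fin (n+1)).castSucc)) _
                    rw [show ((0 : Fin (n+1)).castSucc) = (0 : Fin (n+2)) from rfl,
                      ← hsp0]
                    simpa using s.2.2
                | succ j =>
                    have h := σ.2.2 j
                    rw [← Fin.succ_castSucc, ← hsp j]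
                    simpa using h⟩
          left_inv := fun τ => Subtype.ext (funext fun i => by
            induction i using Fin.cases with
            | zero => rfl
            | succ j => rfl)
          right_inv := fun ⟨σ, s⟩ => rfl }
      rw [Nat.card_congr E, Nat.card_eq_fintype_card, Fintype.card_sigma]
      have hfib : ∀ σ : S, Fintype.card
          {s : Finset (Fin q) // s.card = k 0 ∧ Disjoint s (σ.1 p0)} =
          (q - k (parent 0)).choose (k 0) := by
        intro σ
        rw [← Nat.card_eq_fintype_card, aux_card, σ.2.1 p0]
        have h : k' p0 = k (parent 0) := by
          show k p0.succ = k (parent 0); rw [hsp0]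
        rw [h]
      simp_rw [hfib]
      rw [Finset.sum_const, smul_eq_mul, Finset.card_univ, ← Nat.card_eq_fintype_card]
      have hIH := ih k' (fun i => hk i.succ) parent' hpar'
      rw [hS, hIH]
      rw [Fin.prod_univ_succ]
      have h1 : k' (Fin.last n) = k (Fin.last (n + 1)) := by
        show k (Fin.last n).succ = _; rw [Fin.succ_last]
      have h2 : ∀ i : Fin n, k' (parent' i) = k (parent i.succ) := fun i => by
        show k (parent' i).succ = _; rw [hsp i]
      have h3 : ∀ i : Fin n, k' i.castSucc = k i.succ.castSucc := fun i => by
        show k i.castSucc.succ = _; rw [Fin.succ_castSucc]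
      simp_rw [h1, h2, h3]
      have h5 : k ((0 : Fin (n+1)).castSucc) = k 0 := rfl
      rw [h5]
      ring
end

section
/- The generalized chromatic polynomial satisfies π^G_k(q) = Σ_{m ≥ 0} |P_m(k, G)| · C(q, m), where P_m(k, G) is the set of ordered m-tuples (P_1, ..., P_m) of non-empty independent subsets of the vertex set of G whose disjoint (multiset) union equals the multiset containing each vertex i with multiplicity k_i. -/
set_option linter.unusedSectionVars false


open Finset

section Aux
variable {V : Type*} [Fintype V] [DecidableEq V] (G : SimpleGraph V)
    [DecidableRel G.Adj] (k : V → ℕ) (q : ℕ)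

/-- colorings -/
abbrev Colr := {τ : V → Finset (Fin q) //
    (∀ i, (τ i).card = k i) ∧ ∀ i j : V, G.Adj i j → Disjoint (τ i) (τ j)}

/-- tuples -/
abbrev Tupl (m : ℕ) := {P : Fin m → Finset V //
    (∀ j, (P j).Nonempty ∧ ∀ a ∈ P j, ∀ b ∈ P j, ¬ G.Adj a b) ∧
    ∀ i : V, (Finset.univ.filter fun j => i ∈ P j).card = k i}

abbrev BB := (m : Fin ((∑ i, k i) + 1)) ×
    (Tupl G k (m : ℕ) × {s : Finset (Fin q) // s.card = (m : ℕ)})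

noncomputable def FF (b : BB G k q) : Colr G k q := by
  classical
  obtain ⟨m, ⟨P, hP⟩, ⟨s, hs⟩⟩ := b
  refine ⟨fun i => (Finset.univ.filter fun j => i ∈ P j).image
    (fun j => ((s.orderIsoOfFin hs j : Fin q))), ?_, ?_⟩
  · intro i
    rw [Finset.card_image_of_injective _ (fun a b hab => by
      simpa using (s.orderIsoOfFin hs).injective (Subtype.ext hab))]
    exact hP.2 i
  · intro i j hadj
    rw [Finset.disjoint_left]
    rintro c hci hcj
    simp only [Finset.mem_image, Finset.mem_filter, Finset.mem_univ, true_and] at hci hcj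
    obtain ⟨a, hia, ha⟩ := hci
    obtain ⟨b, hjb, hb⟩ := hcj
    have hab : a = b := (s.orderIsoOfFin hs).injective (Subtype.ext (ha.trans hb.symm))
    subst hab
    exact (hP.1 a).2 i hia j hjb hadj

theorem FF_bij : Function.Bijective (FF G k q) := by
  classical
  constructor
  · rintro ⟨m, ⟨P, hP⟩, ⟨s, hs⟩⟩ ⟨m', ⟨P', hP'⟩, ⟨s', hs'⟩⟩ h
    have hτ : ∀ i, (Finset.univ.filter fun j => i ∈ P j).image
        (fun j => ((s.orderIsoOfFin hs j : Fin q)))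
        = (Finset.univ.filter fun j => i ∈ P' j).image
        (fun j => ((s'.orderIsoOfFin hs' j : Fin q))) :=
      fun i => congrFun (congrArg Subtype.val h) i
    -- s = s' : both equal the set of used colors
    have hmem : ∀ (c : Fin q), c ∈ s ↔ ∃ i, c ∈ (Finset.univ.filter fun j => i ∈ P j).image
        (fun j => ((s.orderIsoOfFin hs j : Fin q))) := by
      intro c
      constructor
      · intro hc
        obtain ⟨j, hj⟩ := (s.orderIsoOfFin hs).surjective ⟨c, hc⟩
        obtain ⟨i, hi⟩ := (hP.1 j).1
        exact ⟨i, Finset.mem_image.2 ⟨j, Finset.mem_filter.2 ⟨Finset.mem_univ _, hi⟩,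
          by rw [hj]⟩⟩
      · rintro ⟨i, hi⟩
        simp only [Finset.mem_image] at hi
        obtain ⟨j, _, hj⟩ := hi
        rw [← hj]; exact (s.orderIsoOfFin hs j).2
    have hmem' : ∀ (c : Fin q), c ∈ s' ↔ ∃ i, c ∈ (Finset.univ.filter fun j => i ∈ P' j).image
        (fun j => ((s'.orderIsoOfFin hs' j : Fin q))) := by
      intro c
      constructor
      · intro hc
        obtain ⟨j, hj⟩ := (s'.orderIsoOfFin hs').surjective ⟨c, hc⟩
        obtain ⟨i, hi⟩ := (hP'.1 j).1
        exact ⟨i, Finset.mem_image.2 ⟨j, Finset.mem_filter.2 ⟨Finset.mem_univ _, hi⟩,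
          by rw [hj]⟩⟩
      · rintro ⟨i, hi⟩
        simp only [Finset.mem_image] at hi
        obtain ⟨j, _, hj⟩ := hi
        rw [← hj]; exact (s'.orderIsoOfFin hs' j).2
    have hss : s = s' := by
      ext c
      rw [hmem c, hmem' c]
      exact exists_congr fun i => by rw [hτ i]
    have hmm : m = m' := by
      apply Fin.ext
      rw [← hs, ← hs', hss]
    subst hmm
    have hss' : s = s' := hss
    subst hss'
    have hP_eq : P = P' := by
      funext j
      ext i
      have key : ∀ (Q : Fin (m:ℕ) → Finset V),
          (i ∈ Q j ↔ ((s.orderIsoOfFin hs j : Fin q)) ∈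
            (Finset.univ.filter fun j' => i ∈ Q j').image
            (fun j' => ((s.orderIsoOfFin hs j' : Fin q)))) := by
        intro Q
        constructor
        · intro hi
          exact Finset.mem_image.2 ⟨j, Finset.mem_filter.2 ⟨Finset.mem_univ _, hi⟩, rfl⟩
        · intro hi
          simp only [Finset.mem_image, Finset.mem_filter, Finset.mem_univ, true_and] at hi
          obtain ⟨j', hj', hjj⟩ := hi
          have : j' = j := (s.orderIsoOfFin hs).injective (Subtype.ext hjj)
          rwa [← this]
      rw [key P, key P', hτ i]
    subst hP_eq
    rfl
  · rintro ⟨τ, hcard, hdisj⟩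
    classical
    set used : Finset (Fin q) := Finset.univ.filter (fun c => ∃ i, c ∈ τ i) with hused
    have husub : ∀ i, τ i ⊆ used := by
      intro i c hc
      exact Finset.mem_filter.2 ⟨Finset.mem_univ _, ⟨i, hc⟩⟩
    have hule : used.card ≤ ∑ i, k i := by
      calc used.card ≤ (Finset.univ.biUnion τ).card := by
            apply Finset.card_le_card
            intro c hc
            obtain ⟨i, hi⟩ := (Finset.mem_filter.1 hc).2
            exact Finset.mem_biUnion.2 ⟨i, Finset.mem_univ _, hi⟩
        _ ≤ ∑ i, (τ i).card := Finset.card_biUnion_le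
        _ = ∑ i, k i := Finset.sum_congr rfl fun i _ => hcard i
    set m : ℕ := used.card with hm
    have hmlt : m < (∑ i, k i) + 1 := Nat.lt_succ_of_le hule
    set e : Fin m ≃o used := used.orderIsoOfFin rfl with he
    set P : Fin m → Finset V := fun j => Finset.univ.filter (fun i => (e j : Fin q) ∈ τ i)
      with hPdef
    have hPprop : (∀ j, (P j).Nonempty ∧ ∀ a ∈ P j, ∀ b ∈ P j, ¬ G.Adj a b) ∧
        ∀ i : V, (Finset.univ.filter fun j => i ∈ P j).card = k i := by
      constructor
      · intro j
        constructor
        · obtain ⟨i, hi⟩ := (Finset.mem_filter.1 (e j).2).2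
          exact ⟨i, Finset.mem_filter.2 ⟨Finset.mem_univ _, hi⟩⟩
        · intro a ha b hb hadj
          have ha' := (Finset.mem_filter.1 ha).2
          have hb' := (Finset.mem_filter.1 hb).2
          exact Finset.disjoint_left.1 (hdisj a b hadj) ha' hb'
      · intro i
        have himg : (Finset.univ.filter fun j => i ∈ P j).image (fun j => (e j : Fin q))
            = τ i := by
          ext c
          simp only [Finset.mem_image, Finset.mem_filter, Finset.mem_univ, true_and, hPdef]
          constructor
          · rintro ⟨j, hj, rfl⟩; exact hj
          · intro hc
            obtain ⟨j, hj⟩ := e.surjective ⟨c, husub i hc⟩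
            refine ⟨j, ?_, by rw [hj]⟩
            rw [hj]; exact hc
        calc (Finset.univ.filter fun j => i ∈ P j).card
            = ((Finset.univ.filter fun j => i ∈ P j).image (fun j => (e j : Fin q))).card := by
              rw [Finset.card_image_of_injective _
                (fun a b hab => e.injective (Subtype.ext hab))]
          _ = (τ i).card := by rw [himg]
          _ = k i := hcard i
    refine ⟨⟨⟨m, hmlt⟩, ⟨P, hPprop⟩, ⟨used, rfl⟩⟩, ?_⟩
    apply Subtype.ext
    funext i
    show (Finset.univ.filter fun j => i ∈ P j).image (fun j => (e j : Fin q)) = τ i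
    ext c
    simp only [Finset.mem_image, Finset.mem_filter, Finset.mem_univ, true_and, hPdef]
    constructor
    · rintro ⟨j, hj, rfl⟩; exact hj
    · intro hc
      obtain ⟨j, hj⟩ := e.surjective ⟨c, husub i hc⟩
      refine ⟨j, ?_, by rw [hj]⟩
      rw [hj]; exact hc

end Aux

/-- `π^G_k(q) = Σ_m |P_m(k,G)| · C(q,m)`, where `P_m(k,G)` is the set of
ordered `m`-tuples of nonempty independent subsets of the vertices of `G` whose disjoint
(multiset) union is the multiset containing each vertex `i` with multiplicity `k i`.
The sum over `m ≥ 0` is truncated at `∑ k + 1` since all further terms vanish. -/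
theorem stmt3 {V : Type*} [Fintype V] [DecidableEq V] (G : SimpleGraph V)
    [DecidableRel G.Adj] (k : V → ℕ) (q : ℕ) :
    Nat.card {τ : V → Finset (Fin q) //
        (∀ i, (τ i).card = k i) ∧ ∀ i j : V, G.Adj i j → Disjoint (τ i) (τ j)} =
      ∑ m ∈ Finset.range ((∑ i, k i) + 1),
        Nat.card {P : Fin m → Finset V //
            (∀ j, (P j).Nonempty ∧ ∀ a ∈ P j, ∀ b ∈ P j, ¬ G.Adj a b) ∧
            ∀ i : V, (Finset.univ.filter fun j => i ∈ P j).card = k i} *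
          Nat.choose q m := by
  classical
  have h1 : Nat.card (BB G k q) = Nat.card (Colr G k q) :=
    Nat.card_eq_of_bijective _ (FF_bij G k q)
  have h2 : Nat.card (BB G k q) = ∑ m : Fin ((∑ i, k i) + 1),
      Nat.card (Tupl G k (m : ℕ)) * Nat.card {s : Finset (Fin q) // s.card = (m : ℕ)} := by
    rw [Nat.card_eq_fintype_card, Fintype.card_sigma]
    refine Finset.sum_congr rfl fun m _ => ?_
    rw [Fintype.card_prod, Nat.card_eq_fintype_card, Nat.card_eq_fintype_card]
  have h3 : ∀ m : ℕ, Nat.card {s : Finset (Fin q) // s.card = m} = Nat.choose q m := by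
    intro m
    rw [Nat.card_eq_fintype_card, Fintype.card_finset_len, Fintype.card_fin]
  show Nat.card (Colr G k q) = _
  rw [← h1, h2, Fin.sum_univ_eq_sum_range
    (fun m => Nat.card (Tupl G k m) * Nat.card {s : Finset (Fin q) // s.card = m})]
  exact Finset.sum_congr rfl fun m _ => by rw [h3 m]
end

section
/- Let G be a finite simple graph and q a positive integer. The number of q-compatible pairs (σ, O), where O is an acyclic orientation of G and σ : V(G) → {1,...,q} satisfies σ(i) ≥ σ(j) for every directed edge i → j of O, equals (-1)^{|V(G)|} · π_G(-q), where π_G is the chromatic polynomial of G. -/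
/-
Deletion–contraction. Fix an edge `uv`. Deleting it, the compatible pairs of `G` in which `u → v`
become the pairs `(σ, O)` of `G - uv` with `σ v ≤ σ u` and no directed path from `v` to `u`, and
symmetrically for `v → u`. Every pair of `G - uv` satisfies one of the two conditions, and both
exactly when `σ u = σ v` and `u`, `v` are incomparable in `O`; those pairs are the compatible pairs
of `G / uv`, the key point being that identifying `u` and `v` creates no directed cycle. Hence the
counts satisfy `Ω_G = Ω_{G-uv} + Ω_{G/uv}`, against `π_G = π_{G-uv} - π_{G/uv}`, and since `G / uv`
has one vertex fewer the signs `(-1)^|V|` match. Edgeless graphs give `q^|V|` on both sides.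
-/

/-- `O` is an orientation of the simple graph `G`: it orients exactly the edges of `G`,
each in exactly one direction. -/
def IsOrientation {V : Type*} (G : SimpleGraph V) (O : V → V → Prop) : Prop :=
  (∀ u v, O u v → G.Adj u v) ∧ (∀ u v, G.Adj u v → (O u v ↔ ¬ O v u))

/-- An orientation is acyclic if it admits no directed cycle. -/
def IsAcyclicRel {V : Type*} (O : V → V → Prop) : Prop :=
  ∀ v, ¬ Relation.TransGen O v v

open Relation

section

variable {V W : Type*}

theorem Nat.card_subtype_add_card_subtype {α : Type*} [Finite α] (p q : α → Prop) :
    Nat.card {x // p x} + Nat.card {x // q x} =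
      Nat.card {x // p x ∨ q x} + Nat.card {x // p x ∧ q x} := by
  have h := Set.ncard_union_add_ncard_inter {x | p x} {x | q x}
  simp only [← Nat.card_coe_set_eq] at h
  exact h.symm

theorem Nat.card_eq_card_subtype_add_card_subtype_not {α : Type*} [Finite α] (p : α → Prop) :
    Nat.card α = Nat.card {x // p x} + Nat.card {x // ¬ p x} := by
  classical
  rw [← Nat.card_sum, Nat.card_congr (Equiv.sumCompl p)]

theorem Nat.card_subtype_ne_add_one [Finite V] (v : V) :
    Nat.card {x // x ≠ v} + 1 = Nat.card V := by
  rw [Nat.card_eq_card_subtype_add_card_subtype_not (· = v), Nat.card_unique (α := {x // x = v}),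
    add_comm]

section Acyclic

variable {O : V → V → Prop}

theorem IsAcyclicRel.asymm (hO : IsAcyclicRel O) {a b : V} (h : O a b) : ¬ O b a :=
  fun h' => hO a (.tail (.single h) h')

theorem IsAcyclicRel.mono {O' : V → V → Prop} (hO' : IsAcyclicRel O')
    (h : ∀ a b, O a b → O' a b) : IsAcyclicRel O :=
  fun a ha => hO' a (TransGen.mono h a a ha)

theorem isOrientation_iff_of_isAcyclicRel {G : SimpleGraph V} (hO : IsAcyclicRel O) :
    IsOrientation G O ↔ (∀ a b, O a b → G.Adj a b) ∧ ∀ a b, G.Adj a b → O a b ∨ O b a := by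
  refine ⟨fun h => ⟨h.1, fun a b hab => ?_⟩, fun h => ⟨h.1, fun a b hab => ?_⟩⟩
  · by_cases hba : O b a
    · exact .inr hba
    · exact .inl ((h.2 a b hab).2 hba)
  · exact ⟨hO.asymm, (h.2 a b hab).resolve_right⟩

theorem le_of_transGen {α : Type*} [Preorder α] {σ : V → α} (hσ : ∀ a b, O a b → σ b ≤ σ a)
    {a b : V} (h : TransGen O a b) : σ b ≤ σ a := by
  induction h with
  | single h => exact hσ _ _ h
  | tail _ h ih => exact (hσ _ _ h).trans ih

theorem transGen_add_edge_imp {u v x y : V}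
    (h : TransGen (fun a b => O a b ∨ (a = u ∧ b = v)) x y) :
    TransGen O x y ∨ (ReflTransGen O x u ∧ ReflTransGen O v y) := by
  induction h with
  | single h =>
    rcases h with h | ⟨rfl, rfl⟩
    · exact .inl (.single h)
    · exact .inr ⟨.refl, .refl⟩
  | tail _ h ih =>
    rcases h with h | ⟨rfl, rfl⟩
    · exact ih.imp (·.tail h) (fun ⟨hxu, hvy⟩ => ⟨hxu, hvy.tail h⟩)
    · exact .inr ⟨ih.elim (·.to_reflTransGen) (·.1), .refl⟩

theorem IsAcyclicRel.add_edge (hO : IsAcyclicRel O) {u v : V} (huv : u ≠ v)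
    (hvu : ¬ TransGen O v u) : IsAcyclicRel (fun a b => O a b ∨ (a = u ∧ b = v)) := by
  intro w hw
  rcases transGen_add_edge_imp hw with h | ⟨hwu, hvw⟩
  · exact hO w h
  · rcases reflTransGen_iff_eq_or_transGen.mp (hvw.trans hwu) with h | h
    · exact huv h
    · exact hvu h

-- `hπ` says that at most one fibre of `π` has more than one point.
theorem IsAcyclicRel.map {π : V → W} (hO : ∀ x y, π x = π y → ¬ TransGen O x y)
    (hπ : ∀ x x' y y', π x = π x' → π y = π y' → x ≠ x' → y ≠ y' → π x = π y) :
    IsAcyclicRel (Relation.Map O π π) := by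
  -- a path in the image lifts to `O`-paths with at most one jump inside a fibre
  have lift : ∀ {a b}, TransGen (Relation.Map O π π) a b → ∃ x y w w', π x = a ∧ π y = b ∧
      π w = π w' ∧ ReflTransGen O x w ∧ TransGen O w' y := by
    intro a b h
    induction h with
    | single h =>
      obtain ⟨x, y, hxy, rfl, rfl⟩ := h
      exact ⟨x, y, x, x, rfl, rfl, rfl, .refl, .single hxy⟩
    | tail _ h ih =>
      obtain ⟨x, y, w, w', rfl, rfl, hw, hxw, hwy⟩ := ih
      obtain ⟨y', z, hyz, hy, rfl⟩ := h
      by_cases hyy : y = y'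
      · subst hyy
        exact ⟨x, z, w, w', rfl, rfl, hw, hxw, hwy.tail hyz⟩
      by_cases hww : w = w'
      · subst hww
        exact ⟨x, z, y, y', rfl, rfl, hy.symm, hxw.trans hwy.to_reflTransGen, .single hyz⟩
      · exact absurd hwy (hO w' y (hπ w' w y y' hw.symm hy.symm (Ne.symm hww) hyy))
  intro a ha
  obtain ⟨x, y, w, w', rfl, hy, hw, hxw, hwy⟩ := lift ha
  by_cases hxy : x = y
  · subst hxy
    exact hO w' w hw.symm (hwy.trans_left hxw)
  by_cases hww : w = w'
  · subst hww
    exact hO x y hy.symm (TransGen.trans_right hxw hwy)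
  · exact hO w' y (hπ w' w y x hw.symm hy (Ne.symm hww) (Ne.symm hxy)) hwy

end Acyclic

abbrev ProperColoringFn (G : SimpleGraph V) (c : ℕ) :=
  {f : V → Fin c // ∀ u v, G.Adj u v → f u ≠ f v}

abbrev CompatiblePair (G : SimpleGraph V) (q : ℕ) :=
  {p : (V → Fin q) × (V → V → Prop) //
    IsOrientation G p.2 ∧ IsAcyclicRel p.2 ∧ ∀ u v, p.2 u v → p.1 v ≤ p.1 u}

section CompatiblePair

variable {G : SimpleGraph V} {q : ℕ}

def mkCompatiblePair (σ : V → Fin q) (O : V → V → Prop) (hsub : ∀ a b, O a b → G.Adj a b)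
    (htot : ∀ a b, G.Adj a b → O a b ∨ O b a) (hac : IsAcyclicRel O)
    (hσ : ∀ a b, O a b → σ b ≤ σ a) : CompatiblePair G q :=
  ⟨(σ, O), (isOrientation_iff_of_isAcyclicRel hac).2 ⟨hsub, htot⟩, hac, hσ⟩

abbrev CompatiblePair.coloring (p : CompatiblePair G q) : V → Fin q := p.1.1

abbrev CompatiblePair.orientation (p : CompatiblePair G q) : V → V → Prop := p.1.2

theorem CompatiblePair.isAcyclic (p : CompatiblePair G q) : IsAcyclicRel p.orientation :=
  p.2.2.1

theorem CompatiblePair.coloring_le (p : CompatiblePair G q) :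
    ∀ a b, p.orientation a b → p.coloring b ≤ p.coloring a :=
  p.2.2.2

theorem CompatiblePair.adj (p : CompatiblePair G q) {a b : V} (h : p.orientation a b) :
    G.Adj a b :=
  p.2.1.1 a b h

theorem CompatiblePair.total (p : CompatiblePair G q) {a b : V} (h : G.Adj a b) :
    p.orientation a b ∨ p.orientation b a :=
  ((isOrientation_iff_of_isAcyclicRel p.isAcyclic).1 p.2.1).2 a b h

theorem CompatiblePair.ext' {p p' : CompatiblePair G q} (hσ : ∀ x, p.coloring x = p'.coloring x)
    (hO : ∀ a b, p.orientation a b ↔ p'.orientation a b) : p = p' :=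
  Subtype.ext (Prod.ext (funext hσ) (funext fun a => funext fun b => propext (hO a b)))

end CompatiblePair

section Map

variable {π : V → W} (hπ : Function.Surjective π) {G : SimpleGraph V}
  (hG : ∀ x y, G.Adj x y → π x ≠ π y)
include hπ hG

noncomputable def properColoringFnMapEquiv (c : ℕ) :
    {f : ProperColoringFn G c // ∀ x y, π x = π y → f.1 x = f.1 y} ≃
      ProperColoringFn (G.map π) c where
  toFun f := ⟨f.1.1 ∘ Function.surjInv hπ, by
    rintro _ _ ⟨-, x, y, hxy, rfl, rfl⟩
    rw [Function.comp_apply, Function.comp_apply, f.2 _ x (Function.surjInv_eq hπ _),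
      f.2 _ y (Function.surjInv_eq hπ _)]
    exact f.1.2 x y hxy⟩
  invFun g := ⟨⟨g.1 ∘ π, fun x y hxy => g.2 _ _ ⟨hG x y hxy, x, y, hxy, rfl, rfl⟩⟩,
    fun _ _ h => congrArg g.1 h⟩
  left_inv f := Subtype.ext (Subtype.ext (funext fun x => f.2 _ _ (Function.surjInv_eq hπ _)))
  right_inv g := Subtype.ext (funext fun a => congrArg g.1 (Function.surjInv_eq hπ a))

variable {q : ℕ}
  (hF : ∀ x x' y y', π x = π x' → π y = π y' → x ≠ x' → y ≠ y' → π x = π y)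
include hF

noncomputable def compatiblePairMapEquiv :
    {p : CompatiblePair G q // ∀ x y, π x = π y →
      p.coloring x = p.coloring y ∧ ¬ TransGen p.orientation x y} ≃
      CompatiblePair (G.map π) q where
  toFun p := mkCompatiblePair (p.1.coloring ∘ Function.surjInv hπ)
    (Relation.Map p.1.orientation π π)
    (by
      rintro _ _ ⟨x, y, h, rfl, rfl⟩
      exact ⟨hG x y (p.1.adj h), x, y, p.1.adj h, rfl, rfl⟩)
    (by
      rintro _ _ ⟨-, x, y, hxy, rfl, rfl⟩
      exact (p.1.total hxy).imp (⟨x, y, ·, rfl, rfl⟩) (⟨y, x, ·, rfl, rfl⟩))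
    (IsAcyclicRel.map (fun x y h => (p.2 x y h).2) hF)
    (by
      rintro _ _ ⟨x, y, h, rfl, rfl⟩
      rw [Function.comp_apply, Function.comp_apply, (p.2 _ x (Function.surjInv_eq hπ _)).1,
        (p.2 _ y (Function.surjInv_eq hπ _)).1]
      exact p.1.coloring_le x y h)
  invFun p := by
    have lift : ∀ {x y}, TransGen (fun a b => G.Adj a b ∧ p.orientation (π a) (π b)) x y →
        TransGen p.orientation (π x) (π y) := fun h => TransGen.lift π (fun _ _ h => h.2) _ _ h
    refine ⟨mkCompatiblePair (p.coloring ∘ π) (fun a b => G.Adj a b ∧ p.orientation (π a) (π b))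
      (fun _ _ h => h.1) (fun a b hab => ?_) (fun a h => p.isAcyclic _ (lift h))
      (fun a b h => p.coloring_le _ _ h.2), fun x y hxy => ⟨congrArg p.coloring hxy, fun h => ?_⟩⟩
    · exact (p.total ⟨hG a b hab, a, b, hab, rfl, rfl⟩).imp (⟨hab, ·⟩) (⟨hab.symm, ·⟩)
    · exact p.isAcyclic _ (hxy ▸ lift h)
  left_inv p := by
    have hac := IsAcyclicRel.map (fun x y h => (p.2 x y h).2) hF
    refine Subtype.ext (CompatiblePair.ext' (fun x => (p.2 _ _ (Function.surjInv_eq hπ _)).1)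
      fun a b => ⟨fun ⟨hab, hmap⟩ => ?_, fun h => ⟨p.1.adj h, a, b, h, rfl, rfl⟩⟩)
    exact (p.1.total hab).resolve_right fun hba => hac.asymm hmap ⟨b, a, hba, rfl, rfl⟩
  right_inv p := by
    refine CompatiblePair.ext' (fun a => congrArg p.coloring (Function.surjInv_eq hπ a))
      fun a b => ⟨fun ⟨x, y, h, hx, hy⟩ => hx ▸ hy ▸ h.2, fun h => ?_⟩
    obtain ⟨-, x, y, hxy, rfl, rfl⟩ := p.adj h
    exact ⟨x, y, ⟨hxy, h⟩, rfl, rfl⟩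

end Map

section DeleteEdge

variable {G : SimpleGraph V} {u v : V} {q : ℕ}

theorem SimpleGraph.deleteEdges_adj_of_ne {a b : V} (hab : G.Adj a b) (h : s(a, b) ≠ s(u, v)) :
    (G.deleteEdges {s(u, v)}).Adj a b :=
  (G.deleteEdges_adj ..).2 ⟨hab, h⟩

theorem SimpleGraph.not_deleteEdges_adj : ¬ (G.deleteEdges {s(u, v)}).Adj u v :=
  fun h => ((G.deleteEdges_adj ..).1 h).2 rfl

theorem SimpleGraph.ncard_edgeSet_deleteEdges_lt [Finite V]
    (huv : G.Adj u v) : (G.deleteEdges {s(u, v)}).edgeSet.ncard < G.edgeSet.ncard := by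
  rw [SimpleGraph.edgeSet_deleteEdges]
  exact Set.ncard_sdiff_singleton_lt_of_mem huv

def compatiblePairDeleteEdgesEquiv (huv : G.Adj u v) :
    {p : CompatiblePair G q // p.orientation u v} ≃
      {p : CompatiblePair (G.deleteEdges {s(u, v)}) q //
        p.coloring v ≤ p.coloring u ∧ ¬ TransGen p.orientation v u} where
  toFun p := ⟨mkCompatiblePair p.1.coloring
      (fun a b => (G.deleteEdges {s(u, v)}).Adj a b ∧ p.1.orientation a b) (fun _ _ h => h.1)
      (fun _ _ hab => (p.1.total (G.deleteEdges_le _ hab)).imp (⟨hab, ·⟩) (⟨hab.symm, ·⟩))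
      (p.1.isAcyclic.mono fun _ _ h => h.2) (fun a b h => p.1.coloring_le a b h.2),
    p.1.coloring_le u v p.2,
    fun h => p.1.isAcyclic u (.head p.2 (TransGen.mono (fun _ _ h => h.2) _ _ h))⟩
  invFun p := ⟨mkCompatiblePair p.1.coloring (fun a b => p.1.orientation a b ∨ (a = u ∧ b = v))
      (fun _ _ h => h.elim (fun h => G.deleteEdges_le _ (p.1.adj h)) fun ⟨ha, hb⟩ => by
        rw [ha, hb]; exact huv)
      (fun a b hab => by
        by_cases he : s(a, b) = s(u, v)
        · rcases Sym2.eq_iff.1 he with ⟨ha, hb⟩ | ⟨ha, hb⟩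
          exacts [.inl (.inr ⟨ha, hb⟩), .inr (.inr ⟨hb, ha⟩)]
        · exact (p.1.total (G.deleteEdges_adj_of_ne hab he)).imp .inl .inl)
      (p.1.isAcyclic.add_edge huv.ne p.2.2)
      (fun a b h => h.elim (p.1.coloring_le a b) fun ⟨ha, hb⟩ => by rw [ha, hb]; exact p.2.1),
    .inr ⟨rfl, rfl⟩⟩
  left_inv p := by
    refine Subtype.ext (CompatiblePair.ext' (fun _ => rfl) fun a b =>
      ⟨fun h => h.elim (·.2) fun ⟨ha, hb⟩ => by rw [ha, hb]; exact p.2, fun h => ?_⟩)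
    by_cases he : s(a, b) = s(u, v)
    · rcases Sym2.eq_iff.1 he with ⟨ha, hb⟩ | ⟨ha, hb⟩
      · exact .inr ⟨ha, hb⟩
      · rw [ha, hb] at h
        exact absurd h (p.1.isAcyclic.asymm p.2)
    · exact .inl ⟨G.deleteEdges_adj_of_ne (p.1.adj h) he, h⟩
  right_inv p := by
    refine Subtype.ext (CompatiblePair.ext' (fun _ => rfl) fun a b =>
      ⟨fun ⟨hab, h⟩ => h.resolve_right ?_, fun h => ⟨p.1.adj h, .inl h⟩⟩)
    rintro ⟨ha, hb⟩
    rw [ha, hb] at hab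
    exact SimpleGraph.not_deleteEdges_adj hab

theorem CompatiblePair.le_and_not_transGen_or (p : CompatiblePair G q) (u v : V) :
    (p.coloring v ≤ p.coloring u ∧ ¬ TransGen p.orientation v u) ∨
      (p.coloring u ≤ p.coloring v ∧ ¬ TransGen p.orientation u v) := by
  by_cases hvu : TransGen p.orientation v u
  · exact .inr ⟨le_of_transGen p.coloring_le hvu, fun huv => p.isAcyclic u (huv.trans hvu)⟩
  rcases le_or_gt (p.coloring v) (p.coloring u) with h | h
  · exact .inl ⟨h, hvu⟩
  · exact .inr ⟨h.le, fun huv => (le_of_transGen p.coloring_le huv).not_gt h⟩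

theorem card_compatiblePair_eq_card_deleteEdges_add_card_incomparable [Finite V]
    (huv : G.Adj u v) :
    Nat.card (CompatiblePair G q) = Nat.card (CompatiblePair (G.deleteEdges {s(u, v)}) q) +
      Nat.card {p : CompatiblePair (G.deleteEdges {s(u, v)}) q //
        (p.coloring v ≤ p.coloring u ∧ ¬ TransGen p.orientation v u) ∧
          (p.coloring u ≤ p.coloring v ∧ ¬ TransGen p.orientation u v)} := by
  -- each pair of `G - uv` extends by `u → v` or by `v → u`, by both exactly in the last summand
  have huv' := Nat.card_congr (compatiblePairDeleteEdgesEquiv (q := q) huv)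
  have hvu := Nat.card_congr (compatiblePairDeleteEdgesEquiv (q := q) huv.symm)
  rw [Sym2.eq_swap] at hvu
  rw [Nat.card_eq_card_subtype_add_card_subtype_not fun p : CompatiblePair G q => p.orientation u v,
    Nat.card_congr (Equiv.subtypeEquivRight fun p : CompatiblePair G q =>
      (p.2.1.2 v u huv.symm).symm), huv', hvu, Nat.card_subtype_add_card_subtype,
    Nat.card_congr (Equiv.subtypeUnivEquiv fun p => p.le_and_not_transGen_or u v)]

end DeleteEdge

section MergeVertex

variable [DecidableEq V] {u v : V}

def mergeVertex (huv : u ≠ v) (x : V) : {x : V // x ≠ v} :=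
  if hx : x = v then ⟨u, huv⟩ else ⟨x, hx⟩

theorem mergeVertex_surjective (huv : u ≠ v) : Function.Surjective (mergeVertex huv) :=
  fun a => ⟨a, dif_neg a.2⟩

theorem mergeVertex_eq_mergeVertex_iff (huv : u ≠ v) {x y : V} :
    mergeVertex huv x = mergeVertex huv y ↔ x = y ∨ s(x, y) = s(u, v) := by
  unfold mergeVertex
  split_ifs with hx hy hy <;> simp only [Subtype.mk.injEq, Sym2.eq_iff] <;> grind

theorem mergeVertex_eq_of_ne (huv : u ≠ v) {x y : V} (h : mergeVertex huv x = mergeVertex huv y)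
    (hxy : x ≠ y) : mergeVertex huv x = mergeVertex huv u := by
  rcases Sym2.eq_iff.1 (((mergeVertex_eq_mergeVertex_iff huv).1 h).resolve_left hxy) with
    ⟨rfl, -⟩ | ⟨rfl, -⟩
  exacts [rfl, (mergeVertex_eq_mergeVertex_iff huv).2 (.inr Sym2.eq_swap)]

theorem forall_mergeVertex_eq_imp_iff (huv : u ≠ v) {R : V → V → Prop} :
    (∀ x y, mergeVertex huv x = mergeVertex huv y → R x y) ↔ (∀ x, R x x) ∧ R u v ∧ R v u := by
  refine ⟨fun h => ⟨fun x => h x x rfl, h u v ?_, h v u ?_⟩, fun ⟨hR, hRuv, hRvu⟩ x y hxy => ?_⟩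
  · exact (mergeVertex_eq_mergeVertex_iff huv).2 (.inr rfl)
  · exact (mergeVertex_eq_mergeVertex_iff huv).2 (.inr Sym2.eq_swap)
  rcases (mergeVertex_eq_mergeVertex_iff huv).1 hxy with rfl | h
  · exact hR x
  · rcases Sym2.eq_iff.1 h with ⟨rfl, rfl⟩ | ⟨rfl, rfl⟩
    exacts [hRuv, hRvu]

theorem mergeVertex_ne_of_deleteEdges_adj {G : SimpleGraph V} (huv : u ≠ v) {x y : V}
    (h : (G.deleteEdges {s(u, v)}).Adj x y) : mergeVertex huv x ≠ mergeVertex huv y := by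
  rw [ne_eq, mergeVertex_eq_mergeVertex_iff, not_or]
  exact ⟨h.ne, ((G.deleteEdges_adj ..).1 h).2⟩

end MergeVertex

theorem SimpleGraph.ncard_edgeSet_map_le [Finite V] (f : V → W) (G : SimpleGraph V) :
    (G.map f).edgeSet.ncard ≤ G.edgeSet.ncard := by
  have hsub : (G.map f).edgeSet ⊆ Sym2.map f '' G.edgeSet := by
    intro e
    induction e using Sym2.ind
    rintro ⟨-, x, y, h, rfl, rfl⟩
    exact ⟨s(x, y), h, rfl⟩
  exact (Set.ncard_le_ncard hsub ((Set.toFinite _).image _)).trans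
    (Set.ncard_image_le (Set.toFinite _))

-- The contraction `G / uv`, with the merged vertex represented by `u`.
def SimpleGraph.contractEdge [DecidableEq V] (G : SimpleGraph V) {u v : V} (huv : u ≠ v) :
    SimpleGraph {x : V // x ≠ v} :=
  (G.deleteEdges {s(u, v)}).map (mergeVertex huv)

section Contract

variable [DecidableEq V] [Finite V] {G : SimpleGraph V} {u v : V}

theorem card_properColoringFn_deleteEdges (huv : G.Adj u v) (c : ℕ) :
    Nat.card (ProperColoringFn (G.deleteEdges {s(u, v)}) c) =
      Nat.card (ProperColoringFn G c) + Nat.card (ProperColoringFn (G.contractEdge huv.ne) c) := by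
  have hne (f : V → Fin c) : ((∀ a b, (G.deleteEdges {s(u, v)}).Adj a b → f a ≠ f b) ∧ f u ≠ f v)
      ↔ ∀ a b, G.Adj a b → f a ≠ f b := by
    refine ⟨fun ⟨hf, hfuv⟩ a b hab => ?_, fun hf => ⟨fun a b hab => hf a b
      (G.deleteEdges_le _ hab), hf u v huv⟩⟩
    by_cases he : s(a, b) = s(u, v)
    · rcases Sym2.eq_iff.1 he with ⟨rfl, rfl⟩ | ⟨rfl, rfl⟩
      exacts [hfuv, hfuv.symm]
    · exact hf a b (G.deleteEdges_adj_of_ne hab he)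
  have heq (f : ProperColoringFn (G.deleteEdges {s(u, v)}) c) :
      ¬ f.1 u ≠ f.1 v ↔ ∀ x y, mergeVertex huv.ne x = mergeVertex huv.ne y → f.1 x = f.1 y := by
    rw [not_ne_iff, forall_mergeVertex_eq_imp_iff]
    exact ⟨fun h => ⟨fun _ => rfl, h, h.symm⟩, fun h => h.2.1⟩
  rw [Nat.card_eq_card_subtype_add_card_subtype_not fun f => f.1 u ≠ f.1 v]
  exact congrArg₂ (· + ·)
    (Nat.card_congr ((Equiv.subtypeSubtypeEquivSubtypeInter _ _).trans
      (Equiv.subtypeEquivRight hne)))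
    (Nat.card_congr ((Equiv.subtypeEquivRight heq).trans (properColoringFnMapEquiv
      (mergeVertex_surjective huv.ne) (fun _ _ => mergeVertex_ne_of_deleteEdges_adj huv.ne) c)))

theorem card_compatiblePair_eq_card_deleteEdges_add_card_contractEdge (huv : G.Adj u v) (q : ℕ) :
    Nat.card (CompatiblePair G q) = Nat.card (CompatiblePair (G.deleteEdges {s(u, v)}) q) +
      Nat.card (CompatiblePair (G.contractEdge huv.ne) q) := by
  have hiff (p : CompatiblePair (G.deleteEdges {s(u, v)}) q) :
      ((p.coloring v ≤ p.coloring u ∧ ¬ TransGen p.orientation v u) ∧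
        (p.coloring u ≤ p.coloring v ∧ ¬ TransGen p.orientation u v)) ↔
        ∀ x y, mergeVertex huv.ne x = mergeVertex huv.ne y →
          p.coloring x = p.coloring y ∧ ¬ TransGen p.orientation x y := by
    rw [forall_mergeVertex_eq_imp_iff]
    constructor
    · rintro ⟨⟨hvu, hnvu⟩, huv, hnuv⟩
      exact ⟨fun x => ⟨rfl, p.isAcyclic x⟩, ⟨le_antisymm huv hvu, hnuv⟩,
        ⟨le_antisymm hvu huv, hnvu⟩⟩
    · rintro ⟨-, ⟨huv, hnuv⟩, hvu, hnvu⟩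
      exact ⟨⟨hvu.le, hnvu⟩, huv.le, hnuv⟩
  rw [card_compatiblePair_eq_card_deleteEdges_add_card_incomparable huv]
  exact congrArg _ (Nat.card_congr ((Equiv.subtypeEquivRight hiff).trans
    (compatiblePairMapEquiv (mergeVertex_surjective huv.ne)
      (fun _ _ => mergeVertex_ne_of_deleteEdges_adj huv.ne)
      fun _ _ _ _ hx hy hxx hyy => (mergeVertex_eq_of_ne huv.ne hx hxx).trans
        (mergeVertex_eq_of_ne huv.ne hy hyy).symm)))

end Contract

theorem card_properColoringFn_bot [Finite V] (c : ℕ) :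
    Nat.card (ProperColoringFn (⊥ : SimpleGraph V) c) = c ^ Nat.card V := by
  rw [Nat.card_congr (Equiv.subtypeUnivEquiv fun _ _ _ h => h.elim), Nat.card_fun, Nat.card_fin]

theorem card_compatiblePair_bot [Finite V] (q : ℕ) :
    Nat.card (CompatiblePair (⊥ : SimpleGraph V) q) = q ^ Nat.card V := by
  have e : CompatiblePair (⊥ : SimpleGraph V) q ≃ (V → Fin q) :=
    { toFun p := p.coloring
      invFun σ := mkCompatiblePair σ (fun _ _ => False) (fun _ _ => False.elim)
        (fun _ _ => False.elim)
        (fun _ h => by obtain ⟨_, h, -⟩ := TransGen.head'_iff.1 h; exact h)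
        (fun _ _ => False.elim)
      left_inv p := CompatiblePair.ext' (fun _ => rfl) fun _ _ => ⟨False.elim, p.adj⟩
      right_inv _ := rfl }
  rw [Nat.card_congr e, Nat.card_fun, Nat.card_fin]

open Polynomial in
def SatisfiesChromaticReciprocity (G : SimpleGraph V) : Prop :=
  ∃ P : ℚ[X], (∀ c : ℕ, P.eval (c : ℚ) = Nat.card (ProperColoringFn G c)) ∧
    ∀ q : ℕ, (Nat.card (CompatiblePair G q) : ℚ) = (-1) ^ Nat.card V * P.eval (-(q : ℚ))

theorem satisfiesChromaticReciprocity_bot [Finite V] :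
    SatisfiesChromaticReciprocity (⊥ : SimpleGraph V) := by
  refine ⟨.X ^ Nat.card V, fun c => ?_, fun q => ?_⟩
  · simp [card_properColoringFn_bot]
  · rw [card_compatiblePair_bot, Polynomial.eval_pow, Polynomial.eval_X, ← mul_pow]
    push_cast
    ring

theorem SatisfiesChromaticReciprocity.of_deleteEdges_of_contractEdge [Finite V] [DecidableEq V]
    {G : SimpleGraph V} {u v : V} (huv : G.Adj u v)
    (hd : SatisfiesChromaticReciprocity (G.deleteEdges {s(u, v)}))
    (hc : SatisfiesChromaticReciprocity (G.contractEdge huv.ne)) :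
    SatisfiesChromaticReciprocity G := by
  obtain ⟨Pd, hPd, hd⟩ := hd
  obtain ⟨Pc, hPc, hc⟩ := hc
  refine ⟨Pd - Pc, fun c => ?_, fun q => ?_⟩
  · rw [Polynomial.eval_sub, hPd, hPc, card_properColoringFn_deleteEdges huv]
    push_cast
    ring
  · rw [card_compatiblePair_eq_card_deleteEdges_add_card_contractEdge huv, Nat.cast_add, hd, hc,
      Polynomial.eval_sub, ← Nat.card_subtype_ne_add_one v, pow_succ]
    ring

theorem satisfiesChromaticReciprocity {V : Type*} [Finite V] (G : SimpleGraph V) :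
    SatisfiesChromaticReciprocity G := by
  classical
  induction hn : G.edgeSet.ncard using Nat.strong_induction_on generalizing V with
  | _ n ih =>
  by_cases hG : ∃ u v, G.Adj u v
  · obtain ⟨u, v, huv⟩ := hG
    have hd := SimpleGraph.ncard_edgeSet_deleteEdges_lt huv
    exact .of_deleteEdges_of_contractEdge huv (ih _ (hn ▸ hd) _ rfl)
      (ih _ (hn ▸ (SimpleGraph.ncard_edgeSet_map_le _ _).trans_lt hd) _ rfl)
  · obtain rfl : G = ⊥ := by
      ext a b
      simpa using fun h => hG ⟨a, b, h⟩
    exact satisfiesChromaticReciprocity_bot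

end

theorem stmt4_general {V : Type*} [Fintype V] (G : SimpleGraph V) (q : ℕ)
    (P : Polynomial ℚ)
    (hP : ∀ c : ℕ, P.eval (c : ℚ) =
      Nat.card {f : V → Fin c // ∀ u v, G.Adj u v → f u ≠ f v}) :
    (Nat.card {p : (V → Fin q) × (V → V → Prop) //
        IsOrientation G p.2 ∧ IsAcyclicRel p.2 ∧
        ∀ u v, p.2 u v → p.1 v ≤ p.1 u} : ℚ) =
      (-1) ^ (Fintype.card V) * P.eval (-(q : ℚ)) := by
  obtain ⟨P₀, hP₀, hrec⟩ := satisfiesChromaticReciprocity G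
  have hPP : P = P₀ := Polynomial.eq_of_infinite_eval_eq P P₀
    ((Set.infinite_range_of_injective Nat.cast_injective).mono
      (by rintro _ ⟨c, rfl⟩; exact (hP c).trans (hP₀ c).symm))
  rw [hPP, Fintype.card_eq_nat_card]
  exact hrec q

/-- Stanley's reciprocity theorem: the number of `q`-compatible pairs `(σ, O)`,
where `O` is an acyclic orientation of `G` and `σ : V → {1,…,q}` satisfies `σ i ≥ σ j` for
every directed edge `i → j` of `O`, equals `(-1)^{|V|} · π_G(-q)`, where `π_G` is the
chromatic polynomial of `G` (characterized by its values at natural numbers). -/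
theorem stmt4 {V : Type*} [Fintype V] (G : SimpleGraph V) (q : ℕ) (hq : 0 < q)
    (P : Polynomial ℚ)
    (hP : ∀ c : ℕ, P.eval (c : ℚ) =
      Nat.card {f : V → Fin c // ∀ u v, G.Adj u v → f u ≠ f v}) :
    (Nat.card {p : (V → Fin q) × (V → V → Prop) //
        IsOrientation G p.2 ∧ IsAcyclicRel p.2 ∧
        ∀ u v, p.2 u v → p.1 v ≤ p.1 u} : ℚ) =
      (-1) ^ (Fintype.card V) * P.eval (-(q : ℚ)) :=
  stmt4_general G q P hP
end

section
/- Let w = i_1 ⋯ i_r be an element of the free partially commutative monoid M(I, G) associated to a simple graph G on vertex set I. Then w has a unique initial alphabet element counted with multiplicity (i.e., |IA_m(w)| = 1) if and only if i_{r-1} ≠ i_r and for every 1 ≤ k < r, the subgraph of G spanned by the vertices {i_k, i_{k+1}, ..., i_r} is connected. -/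
/-- The commutation relation on the free monoid: two letters may be exchanged
whenever they are not adjacent in `G`. -/
def traceRel {V : Type*} (G : SimpleGraph V) : FreeMonoid V → FreeMonoid V → Prop :=
  fun x y => ∃ a b : V, ¬ G.Adj a b ∧
    x = FreeMonoid.of a * FreeMonoid.of b ∧ y = FreeMonoid.of b * FreeMonoid.of a

/-- The congruence on the free monoid generated by the commutation relations. -/
def traceCon {V : Type*} (G : SimpleGraph V) : Con (FreeMonoid V) := conGen (traceRel G)

/-- The free partially commutative monoid (trace monoid) `M(I, G)` associated to `G`. -/
abbrev TraceMonoid {V : Type*} (G : SimpleGraph V) := (traceCon G).Quotient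

/-- The element of the trace monoid represented by a list of letters. -/
def traceMk {V : Type*} (G : SimpleGraph V) (L : List V) : TraceMonoid G :=
  (traceCon G).mk' (FreeMonoid.ofList L)

/-- The multiplicity of the letter `i` in the initial alphabet multiset `IA_m(w)`:
the largest `m` such that `w = u · iᵐ`. -/
noncomputable def IAcount {V : Type*} (G : SimpleGraph V) (w : TraceMonoid G) (i : V) : ℕ :=
  sSup {m : ℕ | ∃ u : TraceMonoid G, w = u * (traceMk G [i]) ^ m}

/-- The initial alphabet `IA(w)` of a trace: the set of letters `i` with `w = u · i`. -/
def IAset {V : Type*} (G : SimpleGraph V) (w : TraceMonoid G) : Set V :=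
  {i | ∃ u : TraceMonoid G, w = u * traceMk G [i]}

/-! The multiplicity of `i` in `IA_m(w)` is the number of occurrences of `i` in a word
representing `w` that are adjacent to no later letter: exactly these occurrences can be commuted
to the end, and their number is invariant under the defining commutations. Summing over `i`
counts the positions whose letter is adjacent to no later letter. The last position always
counts, so `|IA_m(w)| = 1` iff no earlier position `k` does. Such a `k` exists iff the last two
letters coincide, or `i_k` is an isolated vertex of the subgraph spanned by `{i_k, …, i_r}` that
has some other vertex; conversely, if every `i_k` has a neighbour among the later letters, the
suffixes stay connected as they grow to the left. -/

section TraceMonoid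

variable {V : Type*} (G : SimpleGraph V)

lemma traceMk_append (L M : List V) : traceMk G (L ++ M) = traceMk G L * traceMk G M :=
  map_mul (traceCon G).mk' _ _

lemma traceMk_cons (c : V) (L : List V) : traceMk G (c :: L) = traceMk G [c] * traceMk G L :=
  traceMk_append G [c] L

lemma traceMk_replicate (i : V) (m : ℕ) :
    traceMk G (List.replicate m i) = traceMk G [i] ^ m := by
  induction m with
  | zero => rfl
  | succ m ih => rw [List.replicate_succ, traceMk_cons, ih, pow_succ']

lemma traceMk_surjective : Function.Surjective (traceMk G) := fun u => by
  obtain ⟨x, rfl⟩ := (traceCon G).mk'_surjective u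
  exact ⟨x.toList, by rw [traceMk, FreeMonoid.ofList_toList]⟩

lemma commute_traceMk_of_forall_not_adj {i : V} {L : List V} (h : ∀ x ∈ L, ¬ G.Adj i x) :
    Commute (traceMk G [i]) (traceMk G L) := by
  induction L with
  | nil => exact Commute.one_right _
  | cons c L ih =>
    rw [traceMk_cons G c L]
    refine Commute.mul_right ?_ (ih fun x hx => h x (List.mem_cons_of_mem c hx))
    exact (Con.eq _).2 (ConGen.Rel.of _ _ ⟨i, c, h c List.mem_cons_self, rfl, rfl⟩)

end TraceMonoid

section TrailingCount

variable {V : Type*} (G : SimpleGraph V)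

open Classical in
noncomputable def trailingCount (i : V) : List V → ℕ
  | [] => 0
  | c :: t => (if c = i ∧ ∀ x ∈ t, ¬ G.Adj i x then 1 else 0) + trailingCount i t

open Classical in
lemma trailingCount_append (i : V) (L M : List V) :
    trailingCount G i (L ++ M) =
      (if ∀ x ∈ M, ¬ G.Adj i x then trailingCount G i L else 0) + trailingCount G i M := by
  induction L with
  | nil => simp [trailingCount]
  | cons c L ih =>
    simp only [List.cons_append, trailingCount, ih, List.forall_mem_append]
    split_ifs <;> simp_all [add_assoc]

lemma trailingCount_pair_comm (i : V) {a b : V} (hab : ¬ G.Adj a b) :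
    trailingCount G i [a, b] = trailingCount G i [b, a] := by
  by_cases ha : a = i <;> by_cases hb : b = i <;> subst_vars <;>
    simp_all [trailingCount, G.adj_comm]

-- The second conjunct is what makes the `mul` case go through (see `trailingCount_append`).
open Classical in
lemma trailingCount_eq_of_traceCon (i : V) {x y : FreeMonoid V} (h : traceCon G x y) :
    trailingCount G i x.toList = trailingCount G i y.toList ∧
      ((∀ c ∈ x.toList, ¬ G.Adj i c) ↔ ∀ c ∈ y.toList, ¬ G.Adj i c) := by
  induction h with
  | of x y hxy =>
    obtain ⟨a, b, hab, rfl, rfl⟩ := hxy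
    refine ⟨trailingCount_pair_comm G i hab, ?_⟩
    simp only [FreeMonoid.toList_mul, FreeMonoid.toList_of, List.singleton_append,
      List.forall_mem_cons]
    tauto
  | refl => exact ⟨rfl, Iff.rfl⟩
  | symm _ ih => exact ⟨ih.1.symm, ih.2.symm⟩
  | trans _ _ ih₁ ih₂ => exact ⟨ih₁.1.trans ih₂.1, ih₁.2.trans ih₂.2⟩
  | mul _ _ ih₁ ih₂ =>
    simp only [FreeMonoid.toList_mul, trailingCount_append, List.forall_mem_append]
    rw [ih₁.1, ih₂.1, if_congr ih₂.2 rfl rfl]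
    exact ⟨rfl, and_congr ih₁.2 ih₂.2⟩

lemma trailingCount_eq_of_traceMk_eq (i : V) {L M : List V} (h : traceMk G L = traceMk G M) :
    trailingCount G i L = trailingCount G i M :=
  (trailingCount_eq_of_traceCon G i ((Con.eq _).1 h)).1

lemma trailingCount_replicate (i : V) (m : ℕ) :
    trailingCount G i (List.replicate m i) = m := by
  induction m with
  | zero => rfl
  | succ m ih =>
    simp only [List.replicate_succ, trailingCount, ih, List.mem_replicate]
    simp [add_comm]

lemma exists_traceMk_eq_append_replicate (i : V) (L : List V) :
    ∃ M, traceMk G L = traceMk G (M ++ List.replicate (trailingCount G i L) i) := by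
  induction L with
  | nil => exact ⟨[], rfl⟩
  | cons c L ih =>
    obtain ⟨M, hM⟩ := ih
    by_cases hc : c = i ∧ ∀ x ∈ L, ¬ G.Adj i x
    · obtain ⟨rfl, hcL⟩ := hc
      refine ⟨M, ?_⟩
      rw [trailingCount, if_pos ⟨rfl, hcL⟩, add_comm, List.replicate_succ', ← List.append_assoc,
        traceMk_append G _ [c], ← hM, traceMk_cons,
        (commute_traceMk_of_forall_not_adj G hcL).eq]
    · refine ⟨c :: M, ?_⟩
      rw [trailingCount, if_neg hc, zero_add, List.cons_append, traceMk_cons G c L,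
        traceMk_cons G c (M ++ _), hM]

lemma IAcount_traceMk (i : V) (L : List V) :
    IAcount G (traceMk G L) i = trailingCount G i L := by
  have hsuffix :
      {m | ∃ u, traceMk G L = u * traceMk G [i] ^ m} = Set.Iic (trailingCount G i L) := by
    ext m
    constructor
    · rintro ⟨u, hu⟩
      obtain ⟨M, rfl⟩ := traceMk_surjective G u
      rw [← traceMk_replicate, ← traceMk_append] at hu
      rw [Set.mem_Iic, trailingCount_eq_of_traceMk_eq G i hu, trailingCount_append,
        trailingCount_replicate]
      exact Nat.le_add_left _ _
    · intro hm
      obtain ⟨M, hM⟩ := exists_traceMk_eq_append_replicate G i L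
      obtain ⟨k, hk⟩ := Nat.exists_eq_add_of_le (Set.mem_Iic.1 hm)
      refine ⟨traceMk G M * traceMk G [i] ^ k, ?_⟩
      rw [hM, traceMk_append, traceMk_replicate, hk, add_comm, pow_add, mul_assoc]
  rw [IAcount, hsuffix, csSup_Iic]

end TrailingCount

section IsolatedHead

variable {V : Type*} (G : SimpleGraph V)

def IsolatedHead : List V → Prop
  | [] => False
  | c :: t => ∀ x ∈ t, ¬ G.Adj c x

open Classical in
lemma sum_trailingCount_cons [Fintype V] (c : V) (t : List V) :
    ∑ i, trailingCount G i (c :: t) =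
      (if IsolatedHead G (c :: t) then 1 else 0) + ∑ i, trailingCount G i t := by
  simp only [trailingCount, Finset.sum_add_distrib]
  simp [IsolatedHead, ite_and]
  congr

lemma one_le_sum_trailingCount [Fintype V] {L : List V} (hL : L ≠ []) :
    1 ≤ ∑ i, trailingCount G i L := by
  obtain ⟨M, a, rfl⟩ := (List.eq_nil_or_concat' L).resolve_left hL
  calc 1 = trailingCount G a [a] := (trailingCount_replicate G a 1).symm
    _ ≤ trailingCount G a (M ++ [a]) := by rw [trailingCount_append]; exact Nat.le_add_left _ _
    _ ≤ ∑ i, trailingCount G i (M ++ [a]) :=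
      Finset.single_le_sum (f := fun i => trailingCount G i (M ++ [a]))
        (fun _ _ => Nat.zero_le _) (Finset.mem_univ a)

lemma sum_trailingCount_eq_one_iff [Fintype V] {L : List V} (hL : L ≠ []) :
    ∑ i, trailingCount G i L = 1 ↔ ∀ k < L.length - 1, ¬ IsolatedHead G (L.drop k) := by
  induction L with
  | nil => contradiction
  | cons c t ih =>
    rw [sum_trailingCount_cons]
    rcases eq_or_ne t [] with rfl | ht
    · simp [IsolatedHead, trailingCount]
    · have htail := one_le_sum_trailingCount G ht
      obtain ⟨n, hn⟩ := Nat.exists_eq_add_of_lt (List.length_pos_iff.2 ht)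
      rw [List.length_cons, Nat.add_sub_cancel, hn, zero_add, Nat.forall_lt_succ_left]
      simp only [List.drop_zero, List.drop_succ_cons]
      rw [hn, zero_add, Nat.add_sub_cancel] at ih
      rw [← ih ht]
      split_ifs with hc
      · simp only [hc, not_true_eq_false, false_and, iff_false]
        omega
      · simp only [hc, not_false_eq_true, true_and, zero_add]

end IsolatedHead

section Connectivity

variable {V : Type*} (G : SimpleGraph V)

lemma connected_induce_insert_of_adj {S : Set V} {c x : V} (hS : (G.induce S).Connected)
    (hx : x ∈ S) (hcx : G.Adj c x) : (G.induce (insert c S)).Connected := by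
  rw [Set.insert_eq]
  refine G.connected_induce_union ?_ hS.preconnected (Set.mem_singleton c) hx hcx
  rw [SimpleGraph.induce_singleton_eq_top]
  exact SimpleGraph.preconnected_top

lemma not_connected_induce_of_forall_not_adj {S : Set V} {c x : V} (hc : c ∈ S) (hx : x ∈ S)
    (hxc : x ≠ c) (hiso : ∀ y ∈ S, ¬ G.Adj c y) : ¬ (G.induce S).Connected := by
  intro hS
  have : Nontrivial S := ⟨⟨c, hc⟩, ⟨x, hx⟩, fun h => hxc (congrArg Subtype.val h).symm⟩
  obtain ⟨y, hy⟩ := hS.preconnected.exists_adj_of_nontrivial ⟨c, hc⟩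
  exact hiso y y.2 hy

lemma connected_induce_drop_of_forall_not_isolatedHead {L : List V}
    (h : ∀ k < L.length - 1, ¬ IsolatedHead G (L.drop k)) :
    ∀ j < L.length, (G.induce {x | x ∈ L.drop j}).Connected := by
  induction L with
  | nil => simp
  | cons c t ih =>
    have ht : ∀ k < t.length - 1, ¬ IsolatedHead G (t.drop k) := fun k hk =>
      h (k + 1) (by simp only [List.length_cons]; omega)
    rintro (_ | j) hj
    · rcases eq_or_ne t [] with rfl | hne
      · rw [show {y | y ∈ List.drop 0 [c]} = {c} by ext; simp,
          SimpleGraph.induce_singleton_eq_top]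
        exact SimpleGraph.connected_top
      · have htlen := List.length_pos_iff.2 hne
        obtain ⟨x, hx, hcx⟩ : ∃ x ∈ t, G.Adj c x := by
          simpa [IsolatedHead] using h 0 (by simp only [List.length_cons]; omega)
        have hset : {y | y ∈ List.drop 0 (c :: t)} = insert c {y | y ∈ t.drop 0} := by
          ext; simp
        rw [hset]
        exact connected_induce_insert_of_adj G (ih ht 0 htlen) (by simpa using hx) hcx
    · exact ih ht j (by simpa using hj)

lemma getElem_mem_drop_of_le {L : List V} {k l : ℕ} (hkl : k ≤ l) (hl : l < L.length) :
    L[l] ∈ L.drop k :=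
  List.mem_drop_iff_getElem.2 ⟨l - k, by omega, by congr 1; omega⟩

lemma forall_not_isolatedHead_drop_iff (L : List V) :
    (∀ k < L.length - 1, ¬ IsolatedHead G (L.drop k)) ↔
      ((∀ _ : 1 < L.length, L[L.length - 2] ≠ L[L.length - 1]) ∧
        ∀ j < L.length - 1, (G.induce {x | x ∈ L.drop j}).Connected) := by
  constructor
  · intro h
    refine ⟨fun hlen heq => h (L.length - 2) (by omega) ?_,
      fun j hj => connected_induce_drop_of_forall_not_isolatedHead G h j (by omega)⟩
    rw [List.drop_eq_getElem_cons (by omega), List.drop_eq_getElem_cons (by omega),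
      show L.length - 2 + 1 + 1 = L.length by omega, List.drop_length]
    simp only [IsolatedHead, List.forall_mem_singleton,
      show L.length - 2 + 1 = L.length - 1 by omega, ← heq]
    exact G.loopless.irrefl _
  · rintro ⟨hlast, hconn⟩ k hk hiso
    obtain ⟨c, t, hct⟩ := List.exists_cons_of_ne_nil (l := L.drop k) (by simp; omega)
    rw [hct] at hiso
    by_cases hall : ∀ x ∈ t, x = c
    · have hc : ∀ l (hl : l < L.length), k ≤ l → L[l] = c := fun l hl hkl => by
        have := getElem_mem_drop_of_le hkl hl
        rw [hct, List.mem_cons] at this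
        exact this.elim id (hall _)
      exact hlast (by omega) (by rw [hc _ _ (by omega), hc _ _ (by omega)])
    · obtain ⟨x, hx, hxc⟩ : ∃ x ∈ t, x ≠ c := by simpa using hall
      refine not_connected_induce_of_forall_not_adj G (c := c) (x := x) ?_ ?_ hxc ?_ (hconn k hk)
      · simp [hct]
      · simp [hct, hx]
      · intro y hy
        change y ∈ L.drop k at hy
        rw [hct, List.mem_cons] at hy
        rcases hy with rfl | hy
        · exact G.loopless.irrefl _
        · exact hiso y hy

end Connectivity

/-- For a nonempty word `w = i₁⋯i_r` in the free partially commutative monoid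
`M(I,G)`, the initial alphabet multiset `IA_m(w)` has exactly one element (counted with
multiplicity) iff `i_{r-1} ≠ i_r` and for every `1 ≤ k < r` the subgraph of `G` spanned by
`{i_k, …, i_r}` is connected. -/
theorem stmt6 {V : Type*} [Fintype V] (G : SimpleGraph V)
    (L : List V) (hL : L ≠ []) :
    (∑ i : V, IAcount G (traceMk G L) i) = 1 ↔
      ((∀ h : 2 ≤ L.length,
          L.get ⟨L.length - 2, by omega⟩ ≠ L.get ⟨L.length - 1, by omega⟩) ∧
        ∀ j < L.length - 1, (G.induce {x | x ∈ L.drop j}).Connected) := by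
  simp only [IAcount_traceMk, List.get_eq_getElem]
  rw [sum_trailingCount_eq_one_iff G hL]
  exact forall_not_isolatedHead_drop_iff G L
end

section
/- Let G be a finite simple graph and q a positive integer, and for each multiset S of vertices let π^G_S denote the generalized chromatic polynomial with multiplicities given by S. Then for any tuple k of positive integers, π^G_k(-q) = Σ_{(S_1,...,S_q)} π^G_{S_1}(-1) ⋯ π^G_{S_q}(-1), where the sum runs over all ordered partitions (S_1, ..., S_q) of the multiset containing each vertex i with multiplicity k_i into q (possibly empty) multisets. -/
open Finset Polynomial

private lemma nat_card_sigma {ι : Type*} [Fintype ι] {β : ι → Type*} [∀ i, Finite (β i)] :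
    Nat.card (Σ i, β i) = ∑ i, Nat.card (β i) := by
  classical
  letI : ∀ i, Fintype (β i) := fun i => Fintype.ofFinite (β i)
  simp [Nat.card_eq_fintype_card, Fintype.card_sigma]

section slices
variable {q c : ℕ}

/-- slice of a subset of `Fin (q*c)` at block `r`. -/
private def slc (T : Finset (Fin (q * c))) (r : Fin q) : Finset (Fin c) :=
  Finset.univ.filter (fun x => finProdFinEquiv (r, x) ∈ T)

private lemma mem_slc {T : Finset (Fin (q * c))} {r : Fin q} {x : Fin c} :
    x ∈ slc T r ↔ finProdFinEquiv (r, x) ∈ T := by simp [slc]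

private lemma sum_card_slc (T : Finset (Fin (q * c))) :
    ∑ r : Fin q, (slc T r).card = T.card := by
  classical
  calc ∑ r : Fin q, (slc T r).card
      = ∑ r : Fin q, ∑ x : Fin c, if finProdFinEquiv (r, x) ∈ T then 1 else 0 := by
        simp only [slc, Finset.card_filter]
    _ = ∑ p : Fin q × Fin c, if finProdFinEquiv p ∈ T then 1 else 0 := by
        rw [Fintype.sum_prod_type]
    _ = ∑ y : Fin (q * c), if y ∈ T then 1 else 0 :=
        Equiv.sum_comp finProdFinEquiv (fun y => if y ∈ T then 1 else 0)
    _ = T.card := by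
        rw [← Finset.card_filter]
        congr 1
        ext y; simp

private lemma disjoint_slc {T U : Finset (Fin (q * c))} (h : Disjoint T U) (r : Fin q) :
    Disjoint (slc T r) (slc U r) := by
  rw [Finset.disjoint_left] at h ⊢
  intro x hx hy
  exact h (mem_slc.1 hx) (mem_slc.1 hy)

/-- glue a family of subsets of `Fin c` into a subset of `Fin (q*c)`. -/
private def glu (σ : Fin q → Finset (Fin c)) : Finset (Fin (q * c)) :=
  Finset.univ.filter (fun y => (finProdFinEquiv.symm y).2 ∈ σ (finProdFinEquiv.symm y).1)

private lemma slc_glu (σ : Fin q → Finset (Fin c)) (r : Fin q) : slc (glu σ) r = σ r := by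
  ext x
  rw [mem_slc]
  simp only [glu, Finset.mem_filter, Finset.mem_univ, true_and, Equiv.symm_apply_apply]

private lemma glu_slc (T : Finset (Fin (q * c))) : glu (fun r => slc T r) = T := by
  ext y
  simp only [glu, Finset.mem_filter, Finset.mem_univ, true_and, mem_slc]
  rw [Prod.mk.eta, Equiv.apply_symm_apply]

private lemma disjoint_glu {σ υ : Fin q → Finset (Fin c)}
    (h : ∀ r, Disjoint (σ r) (υ r)) : Disjoint (glu σ) (glu υ) := by
  rw [Finset.disjoint_left]
  intro y hy hy'
  simp only [glu, Finset.mem_filter, Finset.mem_univ, true_and] at hy hy'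
  exact Finset.disjoint_left.1 (h _) hy hy'

end slices

/-- for a finite simple graph `G`, positive multiplicities `k` and `q ≥ 1`,
`π^G_k(-q) = Σ_{(S₁,…,S_q)} π^G_{S₁}(-1) ⋯ π^G_{S_q}(-1)`, the sum running over all ordered
partitions of the multiset containing each vertex `i` with multiplicity `k i` into `q`
(possibly empty) multisets; a multiset of vertices is encoded by its multiplicity function,
and `P m` is the generalized chromatic polynomial for multiplicities `m`, characterized by
its values at natural numbers. -/
theorem stmt15 {V : Type*} [Fintype V] [DecidableEq V] (G : SimpleGraph V)
    (P : (V → ℕ) → Polynomial ℚ)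
    (hP : ∀ (m : V → ℕ) (c : ℕ), (P m).eval (c : ℚ) =
      Nat.card {τ : V → Finset (Fin c) //
        (∀ i, (τ i).card = m i) ∧ ∀ i j : V, G.Adj i j → Disjoint (τ i) (τ j)})
    (k : V → ℕ) (hk : ∀ i, 0 < k i) (q : ℕ) (hq : 0 < q) :
    (P k).eval (-(q : ℚ)) =
      ∑ S ∈ Fintype.piFinset (fun i : V => Finset.Nat.antidiagonalTuple q (k i)),
        ∏ r : Fin q, (P (fun i => S i r)).eval (-1) := by
  classical
  set T : ℕ → (V → ℕ) → Type _ := fun c m => {τ : V → Finset (Fin c) //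
      (∀ i, (τ i).card = m i) ∧ ∀ i j : V, G.Adj i j → Disjoint (τ i) (τ j)} with hT
  set A : Finset (V → Fin q → ℕ) :=
    Fintype.piFinset (fun i : V => Finset.Nat.antidiagonalTuple q (k i)) with hA
  -- combinatorial identity
  have key : ∀ c : ℕ, Nat.card (T (q * c) k) =
      ∑ S ∈ A, ∏ r : Fin q, Nat.card (T c (fun i => S i r)) := by
    intro c
    -- slicing map to A
    have fmem : ∀ τ : T (q * c) k, (fun i r => (slc (τ.1 i) r).card) ∈ A := by
      intro τ
      rw [hA, Fintype.mem_piFinset]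
      intro i
      rw [Finset.Nat.mem_antidiagonalTuple, sum_card_slc, τ.2.1 i]
    set f : T (q * c) k → ↥A := fun τ => ⟨fun i r => (slc (τ.1 i) r).card, fmem τ⟩ with hf
    have e2 : ∀ b : ↥A, {τ : T (q * c) k // f τ = b} ≃ Π r : Fin q,
        T c (fun i => (b : V → Fin q → ℕ) i r) := by
      intro b
      refine
        { toFun := fun τ => fun r => ⟨fun i => slc (τ.1.1 i) r, ?_, ?_⟩
          invFun := fun π => ⟨⟨fun i => glu (fun r => (π r).1 i), ?_, ?_⟩, ?_⟩
          left_inv := ?_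
          right_inv := ?_ }
      · intro i
        exact congr_fun (congr_fun (congrArg Subtype.val τ.2) i) r
      · intro i j hij
        exact disjoint_slc (τ.1.2.2 i j hij) r
      · intro i
        have hsum : ∑ r : Fin q, (b : V → Fin q → ℕ) i r = k i :=
          Finset.Nat.mem_antidiagonalTuple.1 ((Fintype.mem_piFinset.1 b.2) i)
        show (glu fun r => (π r).1 i).card = k i
        have h1 : (glu fun r => (π r).1 i).card = ∑ r : Fin q, (b : V → Fin q → ℕ) i r := by
          rw [← sum_card_slc (glu fun r => (π r).1 i)]
          refine Finset.sum_congr rfl fun r _ => ?_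
          rw [slc_glu]
          exact (π r).2.1 i
        rw [h1, hsum]
      · intro i j hij
        exact disjoint_glu (fun r => (π r).2.2 i j hij)
      · rw [hf]
        apply Subtype.ext
        funext i r
        simp only
        rw [slc_glu]
        exact (π r).2.1 i
      · rintro ⟨τ, hτ⟩
        apply Subtype.ext
        apply Subtype.ext
        funext i
        exact glu_slc (τ.1 i)
      · intro π
        funext r
        apply Subtype.ext
        funext i
        simp only
        rw [slc_glu]
    have e : T (q * c) k ≃ Σ b : ↥A, Π r : Fin q, T c (fun i => (b : V → Fin q → ℕ) i r) :=
      (Equiv.sigmaFiberEquiv f).symm.trans (Equiv.sigmaCongrRight e2)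
    rw [Nat.card_congr e, nat_card_sigma]
    simp only [Nat.card_pi]
    exact Finset.sum_coe_sort A (fun S => ∏ r : Fin q, Nat.card (T c fun i => S i r))
  -- polynomial identity
  set Q : Polynomial ℚ := ∑ S ∈ A, ∏ r : Fin q, P (fun i => S i r) with hQ
  set R : Polynomial ℚ := (P k).comp (Polynomial.C (q : ℚ) * Polynomial.X) with hR
  have heval : ∀ c : ℕ, R.eval (c : ℚ) = Q.eval (c : ℚ) := by
    intro c
    have h1 : R.eval (c : ℚ) = (P k).eval ((q * c : ℕ) : ℚ) := by
      rw [hR, Polynomial.eval_comp]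
      push_cast
      simp
    rw [h1, hP k (q * c), key c, hQ]
    push_cast
    rw [Polynomial.eval_finset_sum]
    refine Finset.sum_congr rfl fun S _ => ?_
    rw [Polynomial.eval_prod]
    exact Finset.prod_congr rfl fun r _ => (hP _ c).symm
  have hRQ : R = Q := by
    have hinf : {x : ℚ | (R - Q).IsRoot x}.Infinite := by
      refine Set.Infinite.mono ?_ (Set.infinite_range_of_injective
        (Nat.cast_injective (R := ℚ)))
      rintro _ ⟨c, rfl⟩
      simp [Polynomial.IsRoot, heval c]
    exact sub_eq_zero.mp (Polynomial.eq_zero_of_infinite_isRoot (R - Q) hinf)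
  have h2 : R.eval (-1 : ℚ) = (P k).eval (-(q : ℚ)) := by
    rw [hR, Polynomial.eval_comp]
    norm_num
  rw [← h2, hRQ, hQ, Polynomial.eval_finset_sum]
  refine Finset.sum_congr rfl fun S _ => ?_
  rw [Polynomial.eval_prod]
end

section
/- Let G be a finite simple graph on vertex set I whose free partially commutative Lie algebra n⁺ (generated by e_i, i ∈ I, with relations [e_i, e_j] = 0 for non-adjacent i, j) is graded by Q_+ = ⊕_i Z_+ α_i via deg(e_i) = α_i. Then the Hilbert series of n⁺'s universal enveloping algebra satisfies H(U(n⁺)) = (Σ_{γ ∈ Ω} (-1)^{ht(γ)} e^γ)^{-1}, where Ω is the set of sums of distinct pairwise non-adjacent vertices' generators α_i (i.e., e^γ ranges over independent subsets S ⊂ I with γ = Σ_{i ∈ S} α_i and ht(γ) = |S|). -/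
/-- The Hilbert series of `U(n⁺)` for the free partially commutative Lie algebra of `G`:
`U(n⁺)` has a basis indexed by the trace monoid `M(I,G)`, so the coefficient at a
multidegree `α` is the number of traces with letter multiplicities `α`. -/
noncomputable def traceSeries {V : Type*} [Fintype V] [DecidableEq V] (G : SimpleGraph V) :
    MvPowerSeries V ℚ :=
  fun α : V →₀ ℕ =>
    (Nat.card {w : TraceMonoid G //
      ∃ L : List V, traceMk G L = w ∧ ∀ v, L.count v = α v} : ℚ)

/-- The signed independent-set series `Σ_{γ ∈ Ω} (-1)^{ht γ} e^γ`: the sum over independent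
subsets `s ⊆ V` of `(-1)^{|s|}` times the corresponding squarefree monomial. -/
noncomputable def indepSeries {V : Type*} [Fintype V] [DecidableEq V] (G : SimpleGraph V)
    [DecidableRel G.Adj] : MvPowerSeries V ℚ :=
  ∑ s ∈ Finset.univ.filter (fun s : Finset V => ∀ x ∈ s, ∀ y ∈ s, ¬ G.Adj x y),
    MvPowerSeries.monomial (∑ i ∈ s, Finsupp.single i 1) ((-1 : ℚ) ^ s.card)


/-!
Two words represent the same trace iff their projections onto every pair of dependent letters
agree. Consequently the trace monoid is right cancellative, and `w i = u j` with `i ≠ j` forces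
`i, j` to commute and `w = v j`, `u = v i`. Hence the final letters `IA(w)` of a trace form an
independent set, and for an independent set `s` the traces `w` with `s ⊆ IA(w)` are exactly the
products `u · ∏_{i ∈ s} i`, of degree `deg u + ∑_{i ∈ s} α_i`. The coefficient of `e^α` in the
product of the two series is therefore `∑_w ∑_{s ⊆ IA(w)} (-1)^{|s|}` over the traces `w` of
degree `α`, and the inner sum vanishes unless `IA(w) = ∅`, i.e. `w = 1`.
-/

open FreeMonoid

lemma List.exists_eq_append_cons_notMem_of_mem {α : Type*} {a : α} {l : List α}
    (h : a ∈ l) : ∃ P S, l = P ++ a :: S ∧ a ∉ S := by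
  induction l using List.reverseRecOn with
  | nil => simp at h
  | append_singleton t b ih =>
    by_cases hb : b = a
    · exact ⟨t, [], by simp [hb], by simp⟩
    · obtain ⟨P, S, rfl, hS⟩ := ih (by simpa [Ne.symm hb] using h)
      exact ⟨P, S ++ [b], by simp, by simp [hS, Ne.symm hb]⟩

namespace TraceMonoid

variable {V : Type*} {G : SimpleGraph V}

variable (G) in
abbrev letter (i : V) : TraceMonoid G := traceMk G [i]

variable (G) in
lemma traceMk_surjective : Function.Surjective (traceMk G) := by
  rintro ⟨x⟩
  exact ⟨x.toList, rfl⟩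

variable (G) in
@[simp]
lemma traceMk_nil : traceMk G [] = 1 := rfl

lemma traceMk_append (l l' : List V) : traceMk G (l ++ l') = traceMk G l * traceMk G l' := rfl

lemma traceMk_cons (a : V) (l : List V) : traceMk G (a :: l) = letter G a * traceMk G l := rfl

lemma traceMk_eq_traceMk_iff {l l' : List V} :
    traceMk G l = traceMk G l' ↔ traceCon G (ofList l) (ofList l') :=
  Con.eq _

lemma letter_commute {a b : V} (h : ¬ G.Adj a b) : Commute (letter G a) (letter G b) :=
  traceMk_eq_traceMk_iff.2 <| ConGen.Rel.of _ _ ⟨a, b, h, rfl, rfl⟩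

lemma letter_commute_traceMk {a : V} {l : List V} (h : ∀ x ∈ l, ¬ G.Adj a x) :
    Commute (letter G a) (traceMk G l) := by
  induction l with
  | nil => exact Commute.one_right _
  | cons x l ih =>
    rw [traceMk_cons]
    exact (letter_commute (h x (by simp))).mul_right (ih fun y hy => h y (by simp [hy]))

section Projection

variable [DecidableEq V]

def proj (a b : V) (l : List V) : List V := l.filter fun x => x = a ∨ x = b

@[simp]
lemma proj_nil (a b : V) : proj a b [] = [] := rfl

@[simp]
lemma proj_append (a b : V) (l l' : List V) : proj a b (l ++ l') = proj a b l ++ proj a b l' :=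
  List.filter_append _ _

lemma proj_singleton_of_mem {a b c : V} (h : c = a ∨ c = b) : proj a b [c] = [c] := by
  simp [proj, h]

lemma proj_singleton_of_notMem {a b c : V} (h : ¬ (c = a ∨ c = b)) : proj a b [c] = [] := by
  simp [proj, h]

lemma mem_proj {a b x : V} {l : List V} : x ∈ proj a b l ↔ x ∈ l ∧ (x = a ∨ x = b) := by
  simp [proj]

lemma proj_eq_of_traceCon {x y : FreeMonoid V} (h : traceCon G x y) {a b : V}
    (hab : G.Adj a b ∨ a = b) : proj a b x.toList = proj a b y.toList := by
  induction h with
  | of _ _ hxy =>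
    obtain ⟨c, d, hcd, rfl, rfl⟩ := hxy
    have hdep : (c = a ∨ c = b) → (d = a ∨ d = b) → c = d := by
      rcases hab with hab | rfl
      · rintro (rfl | rfl) (rfl | rfl) <;>
          first | rfl | exact absurd hab hcd | exact absurd hab.symm hcd
      · rintro (rfl | rfl) (rfl | rfl) <;> rfl
    by_cases hc : c = a ∨ c = b <;> by_cases hd : d = a ∨ d = b
    · rw [hdep hc hd]
    all_goals simp [proj, hc, hd]
  | refl => rfl
  | symm _ ih => exact ih.symm
  | trans _ _ ih₁ ih₂ => exact ih₁.trans ih₂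
  | mul _ _ ih₁ ih₂ => simp [ih₁, ih₂]

lemma proj_eq_of_traceMk_eq {l l' : List V} (h : traceMk G l = traceMk G l') {a b : V}
    (hab : G.Adj a b ∨ a = b) : proj a b l = proj a b l' :=
  proj_eq_of_traceCon (traceMk_eq_traceMk_iff.1 h) hab

lemma getLast?_proj_append {a x : V} {S : List V} (ha : a ∉ S) (hx : x ∈ S) (P : List V) :
    (proj a x (P ++ S)).getLast? = some x := by
  have hne : proj a x S ≠ [] := List.ne_nil_of_mem (mem_proj.2 ⟨hx, .inr rfl⟩)
  obtain ⟨y, hy⟩ := Option.ne_none_iff_exists'.1 (mt List.getLast?_eq_none_iff.1 hne)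
  obtain ⟨hyS, rfl | rfl⟩ := mem_proj.1 (List.mem_of_getLast? hy)
  · exact absurd hyS ha
  · simp [List.getLast?_append, hy]

/-- If every dependent pair sees `a` last, the last occurrence of `a` commutes to the end. -/
lemma exists_traceMk_eq_append_singleton {a : V} {l : List V} (ha : a ∈ l)
    (hlast : ∀ x, G.Adj a x → (proj a x l).getLast? = some a) :
    ∃ m, traceMk G l = traceMk G (m ++ [a]) := by
  obtain ⟨P, S, rfl, haS⟩ := List.exists_eq_append_cons_notMem_of_mem ha
  have hS : ∀ x ∈ S, ¬ G.Adj a x := fun x hx hax => by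
    have hx' := hlast x hax
    rw [show P ++ a :: S = (P ++ [a]) ++ S by simp, getLast?_proj_append haS hx] at hx'
    exact hax.ne (Option.some_injective _ hx').symm
  refine ⟨P ++ S, ?_⟩
  rw [traceMk_append, traceMk_cons, (letter_commute_traceMk hS).eq, ← mul_assoc]
  rfl

theorem traceMk_eq_traceMk_iff_proj {l l' : List V} :
    traceMk G l = traceMk G l' ↔ ∀ a b, (G.Adj a b ∨ a = b) → proj a b l = proj a b l' := by
  refine ⟨fun h a b => proj_eq_of_traceMk_eq h, fun h => ?_⟩
  induction l using List.reverseRecOn generalizing l' with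
  | nil =>
    obtain rfl : l' = [] := List.eq_nil_iff_forall_not_mem.2 fun x hx => by
      simpa [← h x x (.inr rfl)] using (mem_proj (b := x)).2 ⟨hx, .inl rfl⟩
    rfl
  | append_singleton t a ih =>
    have ha : a ∈ l' := by
      have : a ∈ proj a a (t ++ [a]) := by simp [proj]
      exact (mem_proj.1 (h a a (.inr rfl) ▸ this)).1
    obtain ⟨m, hm⟩ := exists_traceMk_eq_append_singleton ha fun x hax => by
      simp [← h a x (.inl hax), proj_singleton_of_mem]
    have htm : ∀ c d, (G.Adj c d ∨ c = d) → proj c d t = proj c d m := fun c d hcd => by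
      simpa using (h c d hcd).trans (proj_eq_of_traceMk_eq hm hcd)
    rw [hm, traceMk_append, traceMk_append, ih htm]

end Projection

instance : IsRightCancelMul (TraceMonoid G) where
  mul_right_cancel c := by
    classical
    obtain ⟨l, rfl⟩ := traceMk_surjective G c
    intro w w' h
    obtain ⟨m, rfl⟩ := traceMk_surjective G w
    obtain ⟨m', rfl⟩ := traceMk_surjective G w'
    simp only [← traceMk_append, traceMk_eq_traceMk_iff_proj, proj_append] at h ⊢
    exact fun a b hab => List.append_cancel_right (h a b hab)

theorem exists_eq_mul_letter_of_mul_letter_eq {w u : TraceMonoid G} {i j : V} (hij : i ≠ j)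
    (h : w * letter G i = u * letter G j) :
    ¬ G.Adj i j ∧ ∃ v, w = v * letter G j ∧ u = v * letter G i := by
  classical
  obtain ⟨l, rfl⟩ := traceMk_surjective G w
  obtain ⟨m, rfl⟩ := traceMk_surjective G u
  have hproj {a b : V} (hab : G.Adj a b ∨ a = b) : proj a b (l ++ [i]) = proj a b (m ++ [j]) :=
    proj_eq_of_traceMk_eq h hab
  have hnadj : ¬ G.Adj i j := fun hadj => hij <| by
    simpa [proj_singleton_of_mem] using congrArg List.getLast? (hproj (.inl hadj))
  obtain ⟨l', hl'⟩ : ∃ l', traceMk G l = traceMk G (l' ++ [j]) := by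
    refine exists_traceMk_eq_append_singleton ?_ fun x hjx => ?_
    · have : j ∈ proj j j (l ++ [i]) := by rw [hproj (.inr rfl)]; simp [proj]
      simpa [mem_proj, Ne.symm hij] using this
    · have hi : ¬ (i = j ∨ i = x) := by
        rintro (rfl | rfl)
        exacts [hij rfl, hnadj hjx.symm]
      simpa [proj_singleton_of_notMem hi, proj_singleton_of_mem] using
        congrArg List.getLast? (hproj (.inl hjx))
  refine ⟨hnadj, traceMk G l', by rw [hl', traceMk_append],
    mul_right_cancel (b := letter G j) ?_⟩
  rw [← h, hl', traceMk_append, mul_assoc, mul_assoc, (letter_commute hnadj).eq]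

variable (G) in
noncomputable def degree : TraceMonoid G →* Multiplicative (V →₀ ℕ) :=
  (traceCon G).lift (FreeMonoid.lift fun i => .ofAdd (Finsupp.single i 1)) <|
    Con.conGen_le.2 <| by
      rintro _ _ ⟨a, b, -, rfl, rfl⟩
      simp [Con.ker_rel, ← ofAdd_add, add_comm]

variable (G) in
noncomputable def traces (α : V →₀ ℕ) : Finset (TraceMonoid G) :=
  open Classical in (Finsupp.toMultiset α).lists.toFinset.image (traceMk G)

section Degree

variable [DecidableEq V]

lemma degree_traceMk (l : List V) :
    (degree G (traceMk G l)).toAdd = Multiset.toFinsupp (l : Multiset V) := by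
  induction l with
  | nil => simp
  | cons a l ih =>
    rw [traceMk_cons, map_mul, toAdd_mul, ih, ← Multiset.cons_coe, ← Multiset.singleton_add,
      Multiset.toFinsupp_add, Multiset.toFinsupp_singleton]
    rfl

lemma degree_traceMk_toList (s : Finset V) :
    (degree G (traceMk G s.toList)).toAdd = ∑ i ∈ s, Finsupp.single i 1 := by
  rw [degree_traceMk, Finset.coe_toList, Multiset.toFinsupp_eq_iff,
    Finsupp.toMultiset_sum_single, one_nsmul]

lemma mem_traces {α : V →₀ ℕ} {w : TraceMonoid G} :
    w ∈ traces G α ↔ (degree G w).toAdd = α := by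
  classical
  obtain ⟨l, rfl⟩ := traceMk_surjective G w
  simp only [traces, Finset.mem_image, Multiset.mem_toFinset, Multiset.mem_lists_iff]
  constructor
  · rintro ⟨l', hl', hll'⟩
    rw [← hll', degree_traceMk, Multiset.toFinsupp_eq_iff, hl']
    rfl
  · intro hw
    rw [degree_traceMk, Multiset.toFinsupp_eq_iff] at hw
    exact ⟨l, by rw [← hw]; rfl, rfl⟩

end Degree

lemma mem_IAset_mul_letter (w : TraceMonoid G) (i : V) : i ∈ IAset G (w * letter G i) :=
  ⟨w, rfl⟩

lemma mem_IAset_of_mem_IAset_mul_letter {w : TraceMonoid G} {i a : V}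
    (h : i ∈ IAset G (w * letter G a)) (hia : i ≠ a) : i ∈ IAset G w := by
  obtain ⟨u, hu⟩ := h
  obtain ⟨-, v, hv, -⟩ := exists_eq_mul_letter_of_mul_letter_eq hia.symm hu
  exact ⟨v, hv⟩

lemma not_adj_of_mem_IAset {w : TraceMonoid G} {i j : V} (hi : i ∈ IAset G w)
    (hj : j ∈ IAset G w) : ¬ G.Adj i j := by
  obtain rfl | hij := eq_or_ne i j
  · exact G.irrefl
  obtain ⟨u, rfl⟩ := hi
  obtain ⟨u', hu'⟩ := hj
  exact (exists_eq_mul_letter_of_mul_letter_eq hij hu').1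

lemma IAset_eq_empty_iff {w : TraceMonoid G} : IAset G w = ∅ ↔ w = 1 := by
  constructor
  · intro h
    obtain ⟨l, rfl⟩ := traceMk_surjective G w
    obtain rfl | ⟨l', a, rfl⟩ := l.eq_nil_or_concat
    · rfl
    · have := mem_IAset_mul_letter (traceMk G l') a
      rw [← traceMk_append, ← List.concat_eq_append, h] at this
      exact this.elim
  · rintro rfl
    classical
    refine Set.eq_empty_of_forall_notMem fun i ⟨u, hu⟩ => ?_
    simpa [degree_traceMk] using congrArg (fun w => (degree G w).toAdd i) hu

lemma forall_mem_IAset_iff {l : List V} (hl : l.Nodup)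
    (hind : ∀ x ∈ l, ∀ y ∈ l, ¬ G.Adj x y) {w : TraceMonoid G} :
    (∀ i ∈ l, i ∈ IAset G w) ↔ ∃ u, w = u * traceMk G l := by
  induction l generalizing w with
  | nil => simp
  | cons a l ih =>
    obtain ⟨hal, hl⟩ := List.nodup_cons.1 hl
    have ih (w : TraceMonoid G) :=
      @ih hl (fun x hx y hy => hind x (by simp [hx]) y (by simp [hy])) w
    have hcomm : traceMk G (a :: l) = traceMk G l * letter G a :=
      (letter_commute_traceMk fun x hx => hind a (by simp) x (by simp [hx])).eq
    constructor
    · intro h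
      obtain ⟨w', rfl⟩ := h a (by simp)
      obtain ⟨u, rfl⟩ := (ih _).1 fun i hi =>
        mem_IAset_of_mem_IAset_mul_letter (h i (by simp [hi])) (ne_of_mem_of_not_mem hi hal)
      exact ⟨u, by rw [hcomm, mul_assoc]⟩
    · rintro ⟨u, rfl⟩ i hi
      obtain rfl | hi := List.mem_cons.1 hi
      · rw [hcomm, ← mul_assoc]
        exact mem_IAset_mul_letter _ _
      · rw [traceMk_cons, ← mul_assoc]
        exact (ih _).2 ⟨_, rfl⟩ i hi

section Counting

variable [Fintype V]

open Finset MvPowerSeries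

variable (G) in
noncomputable def initials (w : TraceMonoid G) : Finset V :=
  open Classical in {i | i ∈ IAset G w}

lemma mem_initials {w : TraceMonoid G} {i : V} : i ∈ initials G w ↔ i ∈ IAset G w := by
  simp [initials]

lemma initials_eq_empty_iff {w : TraceMonoid G} : initials G w = ∅ ↔ w = 1 := by
  rw [← IAset_eq_empty_iff, ← Finset.coe_eq_empty, Set.ext_iff, Set.ext_iff]
  simp [mem_initials]

lemma subset_initials_iff {s : Finset V} (hs : ∀ x ∈ s, ∀ y ∈ s, ¬ G.Adj x y)
    {w : TraceMonoid G} : s ⊆ initials G w ↔ ∃ u, w = u * traceMk G s.toList := by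
  simpa [Finset.subset_iff, mem_initials] using
    forall_mem_IAset_iff (G := G) s.nodup_toList (by simpa using hs)

variable [DecidableEq V]

lemma card_filter_subset_initials {s : Finset V} (hs : ∀ x ∈ s, ∀ y ∈ s, ¬ G.Adj x y)
    (α : V →₀ ℕ) :
    #{w ∈ traces G α | s ⊆ initials G w} =
      if ∑ i ∈ s, Finsupp.single i 1 ≤ α then
        #(traces G (α - ∑ i ∈ s, Finsupp.single i 1))
      else 0 := by
  classical
  set p := traceMk G s.toList
  have hp := degree_traceMk_toList (G := G) s
  split_ifs with hle
  · rw [← card_image_of_injective (traces G _) (mul_left_injective p)]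
    congr 1
    ext w
    simp only [mem_filter, mem_image, subset_initials_iff hs, mem_traces]
    constructor
    · rintro ⟨hw, u, rfl⟩
      exact ⟨u, by rw [← hw, map_mul, toAdd_mul, hp, add_tsub_cancel_right], rfl⟩
    · rintro ⟨u, hu, rfl⟩
      exact ⟨by rw [map_mul, toAdd_mul, hu, hp, tsub_add_cancel_of_le hle], u, rfl⟩
  · refine card_eq_zero.2 (filter_eq_empty_iff.2 fun w hw hsw => hle ?_)
    obtain ⟨u, rfl⟩ := (subset_initials_iff hs).1 hsw
    rw [← mem_traces.1 hw, map_mul, toAdd_mul, hp]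
    exact le_add_self

lemma filter_subset_initials_eq_powerset [DecidableRel G.Adj] (w : TraceMonoid G) :
    {s ∈ univ.filter (fun s : Finset V => ∀ x ∈ s, ∀ y ∈ s, ¬ G.Adj x y) | s ⊆ initials G w} =
      (initials G w).powerset := by
  ext s
  simp only [mem_filter, mem_univ, true_and, mem_powerset, and_iff_right_iff_imp]
  exact fun hs x hx y hy => not_adj_of_mem_IAset (mem_initials.1 (hs hx)) (mem_initials.1 (hs hy))

lemma sum_powerset_initials [DecidableEq (TraceMonoid G)] (w : TraceMonoid G) :
    ∑ s ∈ (initials G w).powerset, (-1 : ℚ) ^ #s = if w = 1 then 1 else 0 := by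
  have h := sum_powerset_neg_one_pow_card (x := initials G w)
  simp only [initials_eq_empty_iff] at h
  exact_mod_cast h

lemma coeff_traceSeries (α : V →₀ ℕ) : coeff α (traceSeries G) = #(traces G α) := by
  rw [coeff_apply, traceSeries, ← Nat.card_eq_finsetCard]
  congr 1
  refine Nat.card_congr (Equiv.subtypeEquivRight fun w => ?_)
  rw [mem_traces]
  constructor
  · rintro ⟨l, rfl, hl⟩
    ext v
    simp [degree_traceMk, hl]
  · intro hw
    obtain ⟨l, rfl⟩ := traceMk_surjective G w
    exact ⟨l, rfl, fun v => by simp [← hw, degree_traceMk]⟩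

lemma coeff_monomial_mul_traceSeries {s : Finset V} (hs : ∀ x ∈ s, ∀ y ∈ s, ¬ G.Adj x y)
    (α : V →₀ ℕ) (c : ℚ) :
    coeff α (monomial (∑ i ∈ s, Finsupp.single i 1) c * traceSeries G) =
      ∑ w ∈ traces G α, if s ⊆ initials G w then c else 0 := by
  rw [coeff_monomial_mul, coeff_traceSeries, ← sum_filter, sum_const,
    card_filter_subset_initials hs]
  split_ifs <;> simp [mul_comm]

end Counting

end TraceMonoid

open TraceMonoid Finset MvPowerSeries

/-- Cartier–Foata / denominator identity for free partially commutative Lie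
algebras: `H(U(n⁺)) = (Σ_{γ ∈ Ω} (-1)^{ht γ} e^γ)⁻¹`, i.e. the signed independent-set
series times the generating series of the trace monoid equals `1`. -/
theorem stmt19 {V : Type*} [Fintype V] [DecidableEq V] (G : SimpleGraph V)
    [DecidableRel G.Adj] :
    indepSeries G * traceSeries G = 1 := by
  classical
  ext α
  rw [coeff_one, indepSeries, sum_mul, map_sum]
  calc
    _ = ∑ s ∈ univ.filter (fun s : Finset V => ∀ x ∈ s, ∀ y ∈ s, ¬ G.Adj x y),
          ∑ w ∈ traces G α, if s ⊆ initials G w then (-1 : ℚ) ^ #s else 0 :=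
      sum_congr rfl fun s hs => coeff_monomial_mul_traceSeries (mem_filter.1 hs).2 α _
    _ = ∑ w ∈ traces G α, ∑ s ∈ (initials G w).powerset, (-1 : ℚ) ^ #s := by
      rw [sum_comm]
      refine sum_congr rfl fun w _ => ?_
      rw [← sum_filter, filter_subset_initials_eq_powerset]
    _ = ∑ w ∈ traces G α, if w = 1 then 1 else 0 :=
      sum_congr rfl fun w _ => sum_powerset_initials w
    _ = if α = 0 then 1 else 0 := by
      rw [sum_ite_eq']
      exact if_congr (by rw [mem_traces, map_one, toAdd_one, eq_comm]) rfl rfl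
end
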